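/- arXiv:1208.3632 — 6 statements merged into one kernel-verified Lean document; each statement's English description precedes it below -/
import Mathlib

section
/- For Hermitian matrices A, B of the same size, if the eigenvalues of A majorize those of B, then for every concave function f : ℝ → ℝ one has Tr f(A) ≤ Tr f(B). -/
open scoped BigOperators

/-- The `i`-th largest entry of `w` (decreasing rearrangement). -/
noncomputable def sortDesc {n : ℕ} (w : Fin n → ℝ) : Fin n → ℝ :=
  fun i => (w ∘ Tuple.sort w) i.rev

/-- `Majorizes a b` : the decreasing rearrangement of `a` majorizes that of `b`. -/
noncomputable def Majorizes {n : ℕ} (a b : Fin n → ℝ) : Prop :=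
  (∀ m : ℕ, ∑ i : Fin n, (if (i : ℕ) < m then sortDesc b i else 0) ≤
    ∑ i : Fin n, (if (i : ℕ) < m then sortDesc a i else 0)) ∧
  ∑ i, a i = ∑ i, b i

open Finset

/-- A subgradient of a concave function: the sup of slopes to the right. -/
noncomputable def cSubgrad (f : ℝ → ℝ) (v : ℝ) : ℝ :=
  sSup ((fun u => slope f v u) '' Set.Ioi v)

lemma slope_set_nonempty (f : ℝ → ℝ) (v : ℝ) :
    ((fun u => slope f v u) '' Set.Ioi v).Nonempty :=
  ⟨slope f v (v + 1), ⟨v + 1, by simp, rfl⟩⟩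

lemma slope_le_of_concave {f : ℝ → ℝ} (hf : ConcaveOn ℝ Set.univ f)
    {p q w : ℝ} (hpq : p < q) (hqw : q < w) : slope f q w ≤ slope f p q := by
  have := hf.slope_anti_adjacent (Set.mem_univ p) (Set.mem_univ w) hpq hqw
  simpa [slope_def_field] using this

lemma slope_set_bddAbove {f : ℝ → ℝ} (hf : ConcaveOn ℝ Set.univ f) (v : ℝ) :
    BddAbove ((fun u => slope f v u) '' Set.Ioi v) := by
  refine ⟨slope f (v - 1) v, ?_⟩
  rintro x ⟨u, hu, rfl⟩
  exact slope_le_of_concave hf (by linarith) hu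

lemma cSubgrad_tangent {f : ℝ → ℝ} (hf : ConcaveOn ℝ Set.univ f) (v u : ℝ) :
    f u ≤ f v + cSubgrad f v * (u - v) := by
  rcases lt_trichotomy u v with h | h | h
  · have hle : cSubgrad f v ≤ slope f u v := by
      apply csSup_le (slope_set_nonempty f v)
      rintro x ⟨w, hw, rfl⟩
      exact slope_le_of_concave hf h hw
    rw [slope_def_field] at hle
    have hvu : (0:ℝ) < v - u := by linarith
    have := mul_le_mul_of_nonneg_right hle (le_of_lt hvu)
    rw [div_mul_cancel₀ _ (ne_of_gt hvu)] at this
    nlinarith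
  · simp [h]
  · have hle : slope f v u ≤ cSubgrad f v :=
      le_csSup (slope_set_bddAbove hf v) ⟨u, h, rfl⟩
    rw [slope_def_field] at hle
    have huv : (0:ℝ) < u - v := by linarith
    have := mul_le_mul_of_nonneg_right hle (le_of_lt huv)
    rw [div_mul_cancel₀ _ (ne_of_gt huv)] at this
    linarith

lemma cSubgrad_antitone {f : ℝ → ℝ} (hf : ConcaveOn ℝ Set.univ f) :
    Antitone (cSubgrad f) := by
  intro v v' hvv'
  rcases eq_or_lt_of_le hvv' with rfl | h
  · exact le_rfl
  · apply csSup_le (slope_set_nonempty f v')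
    rintro x ⟨w, hw, rfl⟩
    calc slope f v' w ≤ slope f v v' := slope_le_of_concave hf h hw
    _ ≤ cSubgrad f v := le_csSup (slope_set_bddAbove hf v) ⟨v', h, rfl⟩

/-- Abel-summation core of Hardy–Littlewood–Pólya. -/
lemma abel_key (n : ℕ) (C d e : ℕ → ℝ)
    (hC : Monotone C)
    (hde : ∀ i < n, d i ≤ C i * e i)
    (hD : ∀ m ≤ n, 0 ≤ ∑ i ∈ range m, e i)
    (hDn : ∑ i ∈ range n, e i = 0) :
    ∑ i ∈ range n, d i ≤ 0 := by
  have h1 : ∑ i ∈ range n, d i ≤ ∑ i ∈ range n, C i * e i :=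
    Finset.sum_le_sum fun i hi => hde i (mem_range.mp hi)
  have h2 : ∑ i ∈ range n, C i • e i =
      C (n - 1) • ∑ i ∈ range n, e i -
        ∑ i ∈ range (n - 1), (C (i + 1) - C i) • ∑ j ∈ range (i + 1), e j :=
    Finset.sum_range_by_parts C e n
  simp only [smul_eq_mul, hDn, mul_zero, zero_sub] at h2
  have h3 : 0 ≤ ∑ i ∈ range (n - 1), (C (i + 1) - C i) * ∑ j ∈ range (i + 1), e j := by
    apply Finset.sum_nonneg
    intro i hi
    have hi' : i < n - 1 := mem_range.mp hi
    apply mul_nonneg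
    · have := hC (Nat.le_succ i); linarith
    · exact hD (i + 1) (by omega)
  linarith

lemma sortDesc_antitone {n : ℕ} (w : Fin n → ℝ) : Antitone (sortDesc w) := by
  intro i j hij
  exact Tuple.monotone_sort w (Fin.rev_le_rev.mpr hij)

lemma sum_sortDesc {n : ℕ} (w : Fin n → ℝ) (g : ℝ → ℝ) :
    ∑ i : Fin n, g (sortDesc w i) = ∑ i : Fin n, g (w i) := by
  have := Equiv.sum_comp (Fin.revPerm.trans (Tuple.sort w)) (fun i => g (w i))
  simpa [sortDesc, Function.comp] using this

/-- Hardy–Littlewood–Pólya inequality for concave functions. -/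
lemma hlp {n : ℕ} (a b : Fin n → ℝ) (h : Majorizes a b) {f : ℝ → ℝ}
    (hf : ConcaveOn ℝ Set.univ f) :
    ∑ i, f (a i) ≤ ∑ i, f (b i) := by
  rcases Nat.eq_zero_or_pos n with rfl | hn
  · simp
  set X : ℕ → ℝ := fun i => if h : i < n then sortDesc a ⟨i, h⟩ else 0 with hX
  set Y : ℕ → ℝ := fun i => if h : i < n then sortDesc b ⟨i, h⟩ else 0 with hY
  set C : ℕ → ℝ := fun i => cSubgrad f (Y (min i (n - 1))) with hCdef
  -- conversions between Fin sums and range sums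
  have hXeq : ∀ (i : Fin n), X (i : ℕ) = sortDesc a i := by
    intro i; simp [hX, i.isLt]
  have hYeq : ∀ (i : Fin n), Y (i : ℕ) = sortDesc b i := by
    intro i; simp [hY, i.isLt]
  have hprefix : ∀ (Z : ℕ → ℝ) (z : Fin n → ℝ), (∀ i : Fin n, Z (i : ℕ) = z i) →
      ∀ m ≤ n, ∑ i ∈ range m, Z i = ∑ i : Fin n, (if (i : ℕ) < m then z i else 0) := by
    intro Z z hZ m hm
    have h1 : ∑ i : Fin n, (if (i : ℕ) < m then z i else 0) =
        ∑ i ∈ range n, (if i < m then Z i else 0) := by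
      rw [← Fin.sum_univ_eq_sum_range (fun i => if i < m then Z i else 0) n]
      exact Finset.sum_congr rfl fun i _ => by rw [hZ i]
    rw [h1, Finset.sum_ite, Finset.sum_const_zero, add_zero]
    apply Finset.sum_congr _ fun _ _ => rfl
    ext x; simp only [mem_filter, mem_range]; omega
  have hsum : ∀ (Z : ℕ → ℝ) (z : Fin n → ℝ), (∀ i : Fin n, Z (i : ℕ) = z i) →
      ∑ i ∈ range n, Z i = ∑ i : Fin n, z i := by
    intro Z z hZ
    rw [← Fin.sum_univ_eq_sum_range Z n]
    exact Finset.sum_congr rfl fun i _ => hZ i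
  -- the Y values, restricted to indices < n, are antitone
  have hYanti : ∀ p q : ℕ, p ≤ q → q < n → Y q ≤ Y p := by
    intro p q hpq hq
    have hp : p < n := lt_of_le_of_lt hpq hq
    rw [hY]; simp only [hp, hq, dif_pos]
    exact sortDesc_antitone b (by exact_mod_cast hpq)
  have hCmono : Monotone C := by
    intro i j hij
    apply cSubgrad_antitone hf
    exact hYanti _ _ (min_le_min_right _ hij) (by omega)
  have hkey : ∑ i ∈ range n, (f (X i) - f (Y i)) ≤ 0 := by
    apply abel_key n C _ (fun i => X i - Y i)
    · exact hCmono
    · intro i hi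
      have hmin : min i (n - 1) = i := min_eq_left (by omega)
      have := cSubgrad_tangent hf (Y i) (X i)
      simp only [hCdef, hmin]
      linarith
    · intro m hm
      have hb := (hprefix Y (sortDesc b) hYeq m hm)
      have ha := (hprefix X (sortDesc a) hXeq m hm)
      have := h.1 m
      rw [Finset.sum_sub_distrib, ha, hb]
      linarith
    · rw [Finset.sum_sub_distrib, hsum X _ hXeq, hsum Y _ hYeq]
      have h1 := sum_sortDesc a id
      have h2 := sum_sortDesc b id
      simp only [id] at h1 h2
      rw [h1, h2]
      have := h.2; linarith
  have hfa : ∑ i ∈ range n, f (X i) = ∑ i : Fin n, f (a i) := by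
    rw [hsum (fun i => f (X i)) (fun i => f (sortDesc a i)) (fun i => by simp only [hXeq])]
    exact sum_sortDesc a f
  have hfb : ∑ i ∈ range n, f (Y i) = ∑ i : Fin n, f (b i) := by
    rw [hsum (fun i => f (Y i)) (fun i => f (sortDesc b i)) (fun i => by simp only [hYeq])]
    exact sum_sortDesc b f
  rw [Finset.sum_sub_distrib, hfa, hfb] at hkey
  linarith

/-- if the eigenvalues of the Hermitian matrix `A` majorize those of `B`, then
`Tr f(A) ≤ Tr f(B)` for every concave `f : ℝ → ℝ`; here `f(A)` is defined by functional
calculus, so `Tr f(A) = ∑ f(eigenvalue_i(A))`. -/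
theorem trace_concave_of_majorizes {n : ℕ}
    (A B : Matrix (Fin n) (Fin n) ℂ)
    (hA : A.IsHermitian) (hB : B.IsHermitian)
    (hAB : Majorizes hA.eigenvalues hB.eigenvalues)
    (f : ℝ → ℝ) (hf : ConcaveOn ℝ Set.univ f) :
    ∑ i, f (hA.eigenvalues i) ≤ ∑ i, f (hB.eigenvalues i) := by
  exact hlp _ _ hAB hf
end

section
/- The map Φ̃^k(ρ) = ((2J+1)!/(2K+1)!) Σ_{i_1,...,i_k ∈ {↑,↓}} a_{i_k}* ⋯ a_{i_1}* ρ a_{i_1} ⋯ a_{i_k}, mapping operators on the 2J-particle bosonic sector over ℂ² to operators on the 2K-particle sector (K = J + k/2, k ≥ 0 an integer), is a completely positive trace-preserving map (quantum channel). -/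
open scoped BigOperators ComplexOrder

noncomputable section

/-! We realize the `n`-particle sector of the bosonic Fock space over `ℂ²` as `ℂ^{n+1}`,
with orthonormal basis `φ_j = (j!)^{-1/2}((n-j)!)^{-1/2}(a↓*)^j(a↑*)^{n-j}|0⟩`,
`j = 0,…,n`.  Creation operators act between sectors as the rectangular matrices below. -/

/-- The creation operator `a↑*` from the `n`-particle to the `(n+1)`-particle sector:
`a↑* φ_j^{(n)} = √(n+1-j) φ_j^{(n+1)}`. -/
def aUpStar (n : ℕ) : Matrix (Fin (n + 2)) (Fin (n + 1)) ℂ :=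
  Matrix.of fun i j => if (i : ℕ) = (j : ℕ) then (Real.sqrt (n + 1 - (j : ℕ)) : ℂ) else 0

/-- The creation operator `a↓*` from the `n`-particle to the `(n+1)`-particle sector:
`a↓* φ_j^{(n)} = √(j+1) φ_{j+1}^{(n+1)}`. -/
def aDnStar (n : ℕ) : Matrix (Fin (n + 2)) (Fin (n + 1)) ℂ :=
  Matrix.of fun i j => if (i : ℕ) = (j : ℕ) + 1 then (Real.sqrt ((j : ℕ) + 1) : ℂ) else 0

/-- One Kraus step `ρ ↦ Σ_{i=↑,↓} a_i* ρ a_i`, from operators on the `n`-particle sector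
to operators on the `(n+1)`-particle sector. -/
def stepT (n : ℕ) (ρ : Matrix (Fin (n + 1)) (Fin (n + 1)) ℂ) :
    Matrix (Fin (n + 2)) (Fin (n + 2)) ℂ :=
  aUpStar n * ρ * (aUpStar n).conjTranspose + aDnStar n * ρ * (aDnStar n).conjTranspose

/-- The `k`-fold Kraus sum `Σ_{i_1,…,i_k ∈ {↑,↓}} a_{i_k}*⋯a_{i_1}* ρ a_{i_1}⋯a_{i_k}`. -/
def iterT (n : ℕ) : (k : ℕ) → Matrix (Fin (n + 1)) (Fin (n + 1)) ℂ →
    Matrix (Fin (n + k + 1)) (Fin (n + k + 1)) ℂ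
  | 0, ρ => ρ
  | k + 1, ρ => stepT (n + k) (iterT n k ρ)

/-- The coherent operator quantum channel `Φ̃^k` from spin `J` (`N = 2J`) to spin
`K = J + k/2`:
`Φ̃^k(ρ) = ((2J+1)!/(2K+1)!) Σ_{i_1,…,i_k} a_{i_k}*⋯a_{i_1}* ρ a_{i_1}⋯a_{i_k}`. -/
def channel (N k : ℕ) (ρ : Matrix (Fin (N + 1)) (Fin (N + 1)) ℂ) :
    Matrix (Fin (N + k + 1)) (Fin (N + k + 1)) ℂ :=
  (((N + 1).factorial : ℝ) / ((N + k + 1).factorial : ℝ) : ℂ) • iterT N k ρ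

/-- The eigenvalues `λ_j^{C,k}` of the output of a coherent state under `Φ̃^k`
(`N = 2J`, `2K = N + k`): `λ_j = ((2J+1)/(2K+1))·k!(2J+k−j)!/((2J+k)!(k−j)!)`
for `j ≤ k`, and `0` for `j > k`. -/
def coherentEigenvalue (N k : ℕ) (j : ℕ) : ℝ :=
  if j ≤ k then
    (((N : ℝ) + 1) / ((N : ℝ) + k + 1)) *
      ((k.factorial : ℝ) * ((N + k - j).factorial : ℝ)) /
      (((N + k).factorial : ℝ) * ((k - j).factorial : ℝ))
  else 0

/-- The extension `Φ̃^k ⊗ id_m` acting on operators on (sector) ⊗ ℂ^m, block-wise. -/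
def channelExt (N k m : ℕ)
    (ρ : Matrix (Fin (N + 1) × Fin m) (Fin (N + 1) × Fin m) ℂ) :
    Matrix (Fin (N + k + 1) × Fin m) (Fin (N + k + 1) × Fin m) ℂ :=
  Matrix.of fun p q => channel N k (Matrix.of fun i j => ρ (i, p.2) (j, q.2)) p.1 q.1

open Matrix in
private lemma gram_aux (n : ℕ) :
    (aUpStar n)ᴴ * aUpStar n + (aDnStar n)ᴴ * aDnStar n = (((n : ℂ) + 2)) • 1 := by
  ext j j'
  have h1 : ∀ (i : Fin (n+2)) (j : Fin (n+1)), ((i : ℕ) = (j : ℕ)) ↔ i = j.castSucc := by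
    intro i j; rw [Fin.ext_iff]; simp
  have h1' : ∀ (i : Fin (n+2)) (j : Fin (n+1)), ((i : ℕ) = (j : ℕ) + 1) ↔ i = j.succ := by
    intro i j; rw [Fin.ext_iff]; simp
  simp only [Matrix.add_apply, Matrix.mul_apply, Matrix.conjTranspose_apply,
    aUpStar, aDnStar, Matrix.of_apply, h1, h1', ite_mul, mul_ite, zero_mul, mul_zero,
    apply_ite (starRingEnd ℂ), map_zero, Complex.conj_ofReal, Finset.sum_ite_eq',
    Finset.mem_univ, if_true]
  by_cases h : j = j'
  · subst h
    simp only [Fin.castSucc_inj, Fin.succ_inj, eq_self_iff_true, if_true, ite_true,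
      Complex.star_def, Complex.conj_ofReal]
    rw [← Complex.ofReal_mul, ← Complex.ofReal_mul,
      Real.mul_self_sqrt (by
        have hj : ((j:ℕ):ℝ) ≤ (n:ℝ) := by exact_mod_cast j.is_le
        linarith),
      Real.mul_self_sqrt (by positivity)]
    simp [Matrix.one_apply]
    ring
  · have h2 : ¬ j'.castSucc = j.castSucc := fun hh => h (Fin.castSucc_injective _ hh).symm
    have h3 : ¬ j'.succ = j.succ := fun hh => h (Fin.succ_injective _ hh).symm
    simp [Matrix.one_apply, h, h2, h3]

open Matrix in
private lemma trace_stepT_aux (n : ℕ) (ρ : Matrix (Fin (n + 1)) (Fin (n + 1)) ℂ) :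
    (stepT n ρ).trace = ((n : ℂ) + 2) * ρ.trace := by
  calc (stepT n ρ).trace
      = (ρ * ((aUpStar n)ᴴ * aUpStar n) + ρ * ((aDnStar n)ᴴ * aDnStar n)).trace := by
        rw [stepT, trace_add, trace_add, Matrix.trace_mul_cycle (aUpStar n),
          Matrix.trace_mul_cycle (aDnStar n),
          Matrix.trace_mul_comm ((aUpStar n)ᴴ * aUpStar n) ρ,
          Matrix.trace_mul_comm ((aDnStar n)ᴴ * aDnStar n) ρ]
    _ = (ρ * (((n : ℂ) + 2) • 1)).trace := by rw [← mul_add, gram_aux n]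
    _ = ((n : ℂ) + 2) * ρ.trace := by
        rw [mul_smul_one, trace_smul, smul_eq_mul]

open Matrix in
private lemma trace_iterT_aux (n k : ℕ) (ρ : Matrix (Fin (n + 1)) (Fin (n + 1)) ℂ) :
    (iterT n k ρ).trace
      = (((n + k + 1).factorial : ℂ) / ((n + 1).factorial : ℂ)) * ρ.trace := by
  induction k with
  | zero =>
      rw [iterT]
      rw [div_self (by exact_mod_cast (n+1).factorial_ne_zero), one_mul]
  | succ k ih =>
      rw [iterT, trace_stepT_aux, ih]
      have h2 : ((n + (k+1) + 1).factorial : ℂ)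
          = ((n + k + 1 + 1) : ℕ) * ((n + k + 1).factorial : ℂ) := by
        rw [show n + (k+1) + 1 = (n + k + 1) + 1 by ring, Nat.factorial_succ]
        push_cast; ring
      rw [h2]
      have hne : ((n + 1).factorial : ℂ) ≠ 0 := by exact_mod_cast (n+1).factorial_ne_zero
      field_simp
      push_cast
      ring

/-- Tensoring a rectangular matrix with the identity on `Fin m`. -/
private def extK {a b : ℕ} (A : Matrix (Fin a) (Fin b) ℂ) (m : ℕ) :
    Matrix (Fin a × Fin m) (Fin b × Fin m) ℂ :=
  Matrix.of fun p q => if p.2 = q.2 then A p.1 q.1 else 0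

open Matrix in
private lemma extK_conj {a b : ℕ} (A : Matrix (Fin a) (Fin b) ℂ) (m : ℕ)
    (ρ : Matrix (Fin b × Fin m) (Fin b × Fin m) ℂ) (p q : Fin a × Fin m) :
    (extK A m * ρ * (extK A m)ᴴ) p q
      = (A * (Matrix.of fun i j => ρ (i, p.2) (j, q.2)) * Aᴴ) p.1 q.1 := by
  simp only [Matrix.mul_apply, Matrix.conjTranspose_apply, extK, Matrix.of_apply,
    Fintype.sum_prod_type, ite_mul, mul_ite, zero_mul, mul_zero,
    apply_ite (star : ℂ → ℂ), star_zero]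
  rw [Finset.sum_comm]
  simp [Finset.sum_ite_eq', Finset.mul_sum, Finset.sum_mul]

private lemma psd_smul_aux {d : Type*} [Fintype d] {M : Matrix d d ℂ}
    (hM : M.PosSemidef) {c : ℝ} (hc : 0 ≤ c) : ((c : ℂ) • M).PosSemidef := by
  constructor
  · show ((c : ℂ) • M).conjTranspose = (c : ℂ) • M
    rw [Matrix.conjTranspose_smul, hM.1.eq]
    congr 1
    simp [Complex.star_def, Complex.conj_ofReal]
  · intro x
    have hc' : (0 : ℂ) ≤ (c : ℂ) := by exact_mod_cast hc
    have hx := mul_nonneg hc' (hM.2 x)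
    simp only [Matrix.smul_apply, smul_eq_mul]
    convert hx using 1
    rw [Finsupp.mul_sum]
    refine Finsupp.sum_congr fun i _ => ?_
    rw [Finsupp.mul_sum]
    refine Finsupp.sum_congr fun j _ => ?_
    ring

/-- the map `Φ̃^k` is a completely positive trace-preserving map
(a quantum channel): it preserves traces, and all its extensions `Φ̃^k ⊗ id_m`
preserve positive semidefiniteness. -/

theorem channel_is_CPTP (N k : ℕ) :
    (∀ ρ : Matrix (Fin (N + 1)) (Fin (N + 1)) ℂ, (channel N k ρ).trace = ρ.trace) ∧
    (∀ m : ℕ, ∀ ρ : Matrix (Fin (N + 1) × Fin m) (Fin (N + 1) × Fin m) ℂ,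
      ρ.PosSemidef → (channelExt N k m ρ).PosSemidef) := by
  constructor
  · intro ρ
    rw [channel, Matrix.trace_smul, trace_iterT_aux]
    have h1 : ((N + 1).factorial : ℂ) ≠ 0 := by exact_mod_cast (N+1).factorial_ne_zero
    have h2 : ((N + k + 1).factorial : ℂ) ≠ 0 := by exact_mod_cast (N+k+1).factorial_ne_zero
    rw [smul_eq_mul]
    field_simp
    push_cast
    ring
  · intro m ρ hρ
    have key : ∀ K : ℕ, (Matrix.of fun (p q : Fin (N + K + 1) × Fin m) =>
        iterT N K (Matrix.of fun i j => ρ (i, p.2) (j, q.2)) p.1 q.1).PosSemidef := by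
      intro K
      induction K with
      | zero =>
          have h0 : (Matrix.of fun (p q : Fin (N + 0 + 1) × Fin m) =>
              iterT N 0 (Matrix.of fun i j => ρ (i, p.2) (j, q.2)) p.1 q.1) = ρ := by
            ext ⟨i, u⟩ ⟨j, v⟩
            rfl
          rw [h0]; exact hρ
      | succ K ih =>
          set M : Matrix (Fin (N + K + 1) × Fin m) (Fin (N + K + 1) × Fin m) ℂ :=
            Matrix.of fun p q =>
              iterT N K (Matrix.of fun i j => ρ (i, p.2) (j, q.2)) p.1 q.1 with hM
          have hrw : (Matrix.of fun (p q : Fin (N + (K+1) + 1) × Fin m) =>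
              iterT N (K+1) (Matrix.of fun i j => ρ (i, p.2) (j, q.2)) p.1 q.1)
              = extK (aUpStar (N + K)) m * M * (extK (aUpStar (N + K)) m).conjTranspose
                + extK (aDnStar (N + K)) m * M * (extK (aDnStar (N + K)) m).conjTranspose := by
            ext p q
            rw [Matrix.add_apply, extK_conj, extK_conj]
            rfl
          rw [hrw]
          exact (ih.mul_mul_conjTranspose_same _).add (ih.mul_mul_conjTranspose_same _)
    have hrw2 : channelExt N k m ρ
        = ((((N + 1).factorial : ℝ) / ((N + k + 1).factorial : ℝ)) : ℂ) •
          (Matrix.of fun (p q : Fin (N + k + 1) × Fin m) =>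
            iterT N k (Matrix.of fun i j => ρ (i, p.2) (j, q.2)) p.1 q.1) := by
      ext p q
      rfl
    rw [hrw2]
    rw [← Complex.ofReal_div]
    exact psd_smul_aux (key k)
      (div_nonneg (Nat.cast_nonneg _) (Nat.cast_nonneg _))
end
end

section
/- Eigenvalues of the channel output of a coherent state: for K = J + k/2 with integer k ≥ 0, the density matrix Φ̃^k(|↑⟩_J⟨↑|_J) has eigenvectors φ_j = (j!)^{-1/2}((2J+k−j)!)^{-1/2}(a↓*)^j (a↑*)^{2J+k−j}|0⟩ for j = 0,...,2K, with eigenvalues λ_j^{C,k} = ((2J+1)/(2J+k+1)) · k!(2J+k−j)!/((2J+k)!(k−j)!) for 0 ≤ j ≤ k and 0 for j > k; moreover these eigenvalues are decreasing in j and sum to 1. -/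
open scoped BigOperators ComplexOrder

noncomputable section

lemma sum_ite_fin {n : ℕ} (i : ℕ) (g : Fin n → ℂ) :
    ∑ j : Fin n, (if i = (j : ℕ) then g j else 0) = if h : i < n then g ⟨i, h⟩ else 0 := by
  split
  · next h =>
    rw [Finset.sum_eq_single (⟨i, h⟩ : Fin n)]
    · simp
    · intro b _ hb
      rw [if_neg]
      intro hc
      exact hb (Fin.ext hc.symm)
    · simp
  · next h =>
    apply Finset.sum_eq_zero
    intro j _
    rw [if_neg]
    omega

lemma sum_ite_fin' {n : ℕ} (i : ℕ) (g : Fin n → ℂ) :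
    ∑ j : Fin n, (if i = (j : ℕ) + 1 then g j else 0) =
      if h : i - 1 < n ∧ 1 ≤ i then g ⟨i - 1, h.1⟩ else 0 := by
  split
  · next h =>
    rw [Finset.sum_eq_single (⟨i - 1, h.1⟩ : Fin n)]
    · rw [if_pos]
      simp
      omega
    · intro b _ hb
      rw [if_neg]
      intro hc
      exact hb (Fin.ext (by simp; omega))
    · simp
  · next h =>
    apply Finset.sum_eq_zero
    intro j _
    rw [if_neg]
    omega

lemma up_entry (n : ℕ) (F : ℕ → ℂ) (i i' : Fin (n + 2)) :
    (aUpStar n * Matrix.diagonal (fun j : Fin (n + 1) => F (j : ℕ)) * (aUpStar n).conjTranspose) i i' =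
      if (i : ℕ) = (i' : ℕ) then ((n + 1 - (i : ℕ) : ℕ) : ℂ) * F (i : ℕ) else 0 := by
  rw [Matrix.mul_apply]
  have key : ∀ j : Fin (n + 1),
      (aUpStar n * Matrix.diagonal (fun j : Fin (n + 1) => F (j : ℕ))) i j *
        (aUpStar n).conjTranspose j i' =
      (if (i : ℕ) = (j : ℕ) then
        (if (i : ℕ) = (i' : ℕ) then ((n + 1 - (j : ℕ) : ℕ) : ℂ) * F (j : ℕ) else 0) else 0) := by
    intro j
    simp only [Matrix.mul_diagonal, Matrix.conjTranspose_apply, aUpStar, Matrix.of_apply]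
    by_cases h1 : (i : ℕ) = (j : ℕ)
    · by_cases h2 : (i' : ℕ) = (j : ℕ)
      · rw [if_pos h1, if_pos h2, if_pos h1, if_pos (by omega)]
        have hj : ((j : ℕ) : ℝ) ≤ (n : ℝ) + 1 := by exact_mod_cast Nat.le_of_lt_succ (by omega)
        have hs : (Real.sqrt ((n : ℝ) + 1 - (j : ℕ)) : ℂ) * star (Real.sqrt ((n : ℝ) + 1 - (j : ℕ)) : ℂ)
            = (((n + 1 - (j : ℕ) : ℕ) : ℝ) : ℂ) := by
          rw [Complex.star_def, Complex.conj_ofReal, ← Complex.ofReal_mul,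
            Real.mul_self_sqrt (by linarith)]
          congr 1
          rw [Nat.cast_sub (show (j : ℕ) ≤ n + 1 by omega)]
          push_cast
          ring
        calc (Real.sqrt ((n:ℝ) + 1 - (j : ℕ)) : ℂ) * F (j : ℕ) * star (Real.sqrt ((n:ℝ) + 1 - (j:ℕ)) : ℂ)
            = ((Real.sqrt ((n:ℝ) + 1 - (j : ℕ)) : ℂ) * star (Real.sqrt ((n:ℝ) + 1 - (j:ℕ)) : ℂ)) * F (j : ℕ) := by ring
          _ = _ := by rw [hs]; norm_cast
      · rw [if_pos h1, if_neg h2, if_pos h1, if_neg (by omega)]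
        simp
    · rw [if_neg h1, if_neg h1]
      simp
  rw [Finset.sum_congr rfl (fun j _ => key j), sum_ite_fin]
  by_cases h : (i : ℕ) < n + 1
  · simp [h]
  · rw [dif_neg h]
    have : n + 1 - (i : ℕ) = 0 := by omega
    rw [this]
    simp

lemma dn_entry (n : ℕ) (F : ℕ → ℂ) (i i' : Fin (n + 2)) :
    (aDnStar n * Matrix.diagonal (fun j : Fin (n + 1) => F (j : ℕ)) * (aDnStar n).conjTranspose) i i' =
      if (i : ℕ) = (i' : ℕ) then ((i : ℕ) : ℂ) * F ((i : ℕ) - 1) else 0 := by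
  rw [Matrix.mul_apply]
  have key : ∀ j : Fin (n + 1),
      (aDnStar n * Matrix.diagonal (fun j : Fin (n + 1) => F (j : ℕ))) i j *
        (aDnStar n).conjTranspose j i' =
      (if (i : ℕ) = (j : ℕ) + 1 then
        (if (i : ℕ) = (i' : ℕ) then (((j : ℕ) + 1 : ℕ) : ℂ) * F (j : ℕ) else 0) else 0) := by
    intro j
    simp only [Matrix.mul_diagonal, Matrix.conjTranspose_apply, aDnStar, Matrix.of_apply]
    by_cases h1 : (i : ℕ) = (j : ℕ) + 1
    · by_cases h2 : (i' : ℕ) = (j : ℕ) + 1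
      · rw [if_pos h1, if_pos h2, if_pos h1, if_pos (by omega)]
        have hs : (Real.sqrt ((j : ℕ) + 1) : ℂ) * star (Real.sqrt ((j : ℕ) + 1) : ℂ)
            = ((((j : ℕ) + 1 : ℕ) : ℝ) : ℂ) := by
          rw [Complex.star_def, Complex.conj_ofReal, ← Complex.ofReal_mul,
            Real.mul_self_sqrt (by positivity)]
          norm_cast
        calc (Real.sqrt ((j:ℕ) + 1) : ℂ) * F (j : ℕ) * star (Real.sqrt ((j:ℕ) + 1) : ℂ)
            = ((Real.sqrt ((j:ℕ) + 1) : ℂ) * star (Real.sqrt ((j:ℕ) + 1) : ℂ)) * F (j : ℕ) := by ring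
          _ = _ := by rw [hs]; norm_cast
      · rw [if_pos h1, if_neg h2, if_pos h1, if_neg (by omega)]
        simp
    · rw [if_neg h1, if_neg h1]
      simp
  rw [Finset.sum_congr rfl (fun j _ => key j), sum_ite_fin']
  by_cases h : (i : ℕ) - 1 < n + 1 ∧ 1 ≤ (i : ℕ)
  · rw [dif_pos h]
    have : ((i : ℕ) - 1 : ℕ) + 1 = (i : ℕ) := by omega
    simp only [this]
  · rw [dif_neg h]
    have h0 : (i : ℕ) = 0 := by omega
    rw [h0]
    simp

lemma stepT_diag (n : ℕ) (F : ℕ → ℂ) :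
    stepT n (Matrix.diagonal (fun i : Fin (n + 1) => F (i : ℕ))) =
      Matrix.diagonal (fun i : Fin (n + 2) =>
        ((n + 1 - (i : ℕ) : ℕ) : ℂ) * F (i : ℕ) + ((i : ℕ) : ℂ) * F ((i : ℕ) - 1)) := by
  ext i i'
  rw [stepT, Matrix.add_apply, up_entry, dn_entry, Matrix.diagonal_apply]
  by_cases h : i = i'
  · rw [if_pos h, if_pos (by rw [h]), if_pos (by rw [h])]
  · rw [if_neg h, if_neg (by simpa [Fin.ext_iff] using h), if_neg (by simpa [Fin.ext_iff] using h),
      add_zero]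

def dcoef (N m j : ℕ) : ℕ := m.descFactorial j * (N + m - j).descFactorial (m - j)

lemma dcoef_rec (N m j : ℕ) :
    dcoef N (m + 1) j = (N + m + 1 - j) * dcoef N m j + j * dcoef N m (j - 1) := by
  unfold dcoef
  match j with
  | 0 =>
    simp only [Nat.descFactorial_zero, Nat.sub_zero, Nat.zero_sub, Nat.mul_zero, Nat.zero_mul,
      add_zero, one_mul]
    show ((N + m) + 1).descFactorial (m + 1) = _
    rw [Nat.succ_descFactorial_succ]
  | t + 1 =>
    simp only [Nat.succ_sub_one]
    rcases lt_trichotomy t m with h | h | h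
    · -- t < m
      obtain ⟨a, ha⟩ : ∃ a, m - t - 1 = a := ⟨_, rfl⟩
      obtain ⟨b, hb⟩ : ∃ b, N + m - t - 1 = b := ⟨_, rfl⟩
      rw [show N + (m + 1) - (t + 1) = b + 1 by omega, show m + 1 - (t + 1) = a + 1 by omega,
        show N + m - (t + 1) = b by omega, show m - (t + 1) = a by omega,
        show N + m + 1 - (t + 1) = b + 1 by omega, show N + m - t = b + 1 by omega,
        show m - t = a + 1 by omega, Nat.succ_descFactorial_succ, Nat.succ_descFactorial_succ,
        Nat.descFactorial_succ, show m - t = a + 1 by omega,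
        show m + 1 = (a + 1) + (t + 1) by omega]
      ring
    · -- t = m
      subst h
      rw [show N + (t + 1) - (t + 1) = N by omega, show t + 1 - (t + 1) = 0 by omega,
        show N + t + 1 - (t + 1) = N by omega, show N + t - t = N by omega,
        show t - t = 0 by omega, Nat.descFactorial_self, Nat.descFactorial_self,
        Nat.descFactorial_of_lt (show t < t + 1 by omega), Nat.factorial_succ]
      ring
    · -- m < t
      rw [Nat.descFactorial_of_lt (show m + 1 < t + 1 by omega),
        Nat.descFactorial_of_lt (show m < t + 1 by omega),
        Nat.descFactorial_of_lt (show m < t by omega)]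
      simp

lemma iterT_diag (N k : ℕ) :
    iterT N k (Matrix.single 0 0 1) =
      Matrix.diagonal (fun i : Fin (N + k + 1) => ((dcoef N k (i : ℕ) : ℕ) : ℂ)) := by
  induction k with
  | zero =>
    show Matrix.single 0 0 1 = _
    ext i i'
    by_cases h : i = i'
    · subst h
      rw [Matrix.diagonal_apply_eq]
      by_cases h0 : i = 0
      · subst h0
        simp [dcoef, Matrix.single]
      · have h0' : (i : ℕ) ≠ 0 := fun hc => h0 (Fin.ext (by rw [hc]; rfl))
        obtain ⟨t, ht⟩ := Nat.exists_eq_succ_of_ne_zero h0'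
        rw [Matrix.single_apply_of_ne (i := (0 : Fin (N + 1))) (j := (0 : Fin (N + 1))) (i' := i) (j' := i)
          (c := (1 : ℂ)) (by tauto)]
        simp [dcoef, ht]
    · rw [Matrix.diagonal_apply_ne _ h, Matrix.single_apply_of_ne]
      intro hc
      exact h (hc.1.symm.trans hc.2)
  | succ m ih =>
    show stepT (N + m) (iterT N m _) = _
    rw [ih, stepT_diag (N + m) (fun x => (dcoef N m x : ℂ))]
    refine congrArg Matrix.diagonal (funext fun i => ?_)
    have h := dcoef_rec N m (i : ℕ)
    have : ((dcoef N (m + 1) (i : ℕ) : ℕ) : ℂ) =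
        ((N + m + 1 - (i : ℕ) : ℕ) : ℂ) * (dcoef N m (i : ℕ) : ℂ) +
          ((i : ℕ) : ℂ) * (dcoef N m ((i : ℕ) - 1) : ℂ) := by
      exact_mod_cast congrArg (Nat.cast (R := ℂ)) h
    exact this.symm

lemma eig_eq (N k j : ℕ) :
    coherentEigenvalue N k j =
      ((N + 1).factorial : ℝ) / ((N + k + 1).factorial : ℝ) * (dcoef N k j : ℝ) := by
  unfold coherentEigenvalue dcoef
  by_cases h : j ≤ k
  · rw [if_pos h]
    have h1 : ((k - j).factorial : ℝ) * (k.descFactorial j : ℝ) = (k.factorial : ℝ) := by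
      exact_mod_cast congrArg (Nat.cast (R := ℝ)) (Nat.factorial_mul_descFactorial h)
    have h2 : (N.factorial : ℝ) * ((N + k - j).descFactorial (k - j) : ℝ) =
        ((N + k - j).factorial : ℝ) := by
      have h2' := Nat.factorial_mul_descFactorial (show k - j ≤ N + k - j by omega)
      rw [show N + k - j - (k - j) = N by omega] at h2'
      exact_mod_cast congrArg (Nat.cast (R := ℝ)) h2'
    have h3 : ((N + 1).factorial : ℝ) = ((N : ℝ) + 1) * (N.factorial : ℝ) := by
      push_cast [Nat.factorial_succ]; ring
    have h4 : ((N + k + 1).factorial : ℝ) = ((N : ℝ) + k + 1) * ((N + k).factorial : ℝ) := by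
      push_cast [Nat.factorial_succ]; ring
    rw [h3, h4, ← h1, ← h2]
    push_cast
    have n1 : ((N + k).factorial : ℝ) ≠ 0 := by positivity
    have n2 : ((k - j).factorial : ℝ) ≠ 0 := by positivity
    have n3 : ((N : ℝ) + k + 1) ≠ 0 := by positivity
    field_simp
  · rw [if_neg h, Nat.descFactorial_of_lt (by omega)]
    simp

lemma dcoef_anti (N k j : ℕ) : dcoef N k (j + 1) ≤ dcoef N k j := by
  by_cases h : j < k
  · unfold dcoef
    obtain ⟨a, ha⟩ : ∃ a, k - j - 1 = a := ⟨_, rfl⟩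
    obtain ⟨b, hb⟩ : ∃ b, N + k - j - 1 = b := ⟨_, rfl⟩
    rw [show N + k - (j + 1) = b by omega, show k - (j + 1) = a by omega,
      show N + k - j = b + 1 by omega, show k - j = a + 1 by omega,
      Nat.descFactorial_succ, show k - j = a + 1 by omega, Nat.succ_descFactorial_succ]
    calc (a + 1) * k.descFactorial j * b.descFactorial a
        ≤ (b + 1) * k.descFactorial j * b.descFactorial a := by
          have : a + 1 ≤ b + 1 := by omega
          exact Nat.mul_le_mul_right _ (Nat.mul_le_mul_right _ this)
      _ = k.descFactorial j * ((b + 1) * b.descFactorial a) := by ring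
  · rw [show dcoef N k (j + 1) = 0 by
      unfold dcoef; rw [Nat.descFactorial_of_lt (by omega)]; simp]
    exact Nat.zero_le _

lemma eig_nonneg (N k j : ℕ) : 0 ≤ coherentEigenvalue N k j := by
  rw [eig_eq]; positivity

lemma eig_anti (N k : ℕ) : Antitone (coherentEigenvalue N k) := by
  apply antitone_nat_of_succ_le
  intro j
  rw [eig_eq, eig_eq]
  have := dcoef_anti N k j
  have h' : ((dcoef N k (j + 1) : ℕ) : ℝ) ≤ ((dcoef N k j : ℕ) : ℝ) := by exact_mod_cast this
  exact mul_le_mul_of_nonneg_left h' (by positivity)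

lemma eig_term (N k j : ℕ) (hj : j ≤ k) :
    coherentEigenvalue N k j =
      ((N + k - j).choose N : ℝ) / ((N + k + 1).choose (N + 1) : ℝ) := by
  rw [coherentEigenvalue, if_pos hj, Nat.cast_choose ℝ (show N ≤ N + k - j by omega),
    Nat.cast_choose ℝ (show N + 1 ≤ N + k + 1 by omega),
    show N + k - j - N = k - j by omega, show N + k + 1 - (N + 1) = k by omega,
    show ((N + 1).factorial : ℝ) = ((N : ℝ) + 1) * (N.factorial : ℝ) by
      push_cast [Nat.factorial_succ]; ring,
    show ((N + k + 1).factorial : ℝ) = ((N : ℝ) + k + 1) * ((N + k).factorial : ℝ) by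
      push_cast [Nat.factorial_succ]; ring]
  have n1 : ((N + k).factorial : ℝ) ≠ 0 := by positivity
  have n2 : ((k - j).factorial : ℝ) ≠ 0 := by positivity
  have n3 : ((N : ℝ) + k + 1) ≠ 0 := by positivity
  have n4 : (N.factorial : ℝ) ≠ 0 := by positivity
  have n5 : (k.factorial : ℝ) ≠ 0 := by positivity
  have n6 : ((N + k - j).factorial : ℝ) ≠ 0 := by positivity
  field_simp

lemma eig_sum (N k : ℕ) :
    ∑ j ∈ Finset.range (k + 1), coherentEigenvalue N k j = 1 := by
  have hsum : ∑ j ∈ Finset.range (k + 1), (N + k - j).choose N =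
      (N + k + 1).choose (N + 1) := by
    have hrefl := Finset.sum_range_reflect (fun j => (j + N).choose N) (k + 1)
    have hterm : ∀ j ∈ Finset.range (k + 1),
        (N + k - j).choose N = (k + 1 - 1 - j + N).choose N := by
      intro j hj
      simp only [Finset.mem_range] at hj
      congr 1
      omega
    rw [Finset.sum_congr rfl hterm, hrefl, Nat.sum_range_add_choose k N]
    rw [Nat.add_comm k N]
  have hpos : (0 : ℝ) < ((N + k + 1).choose (N + 1) : ℝ) := by
    exact_mod_cast Nat.choose_pos (show N + 1 ≤ N + k + 1 by omega)
  calc ∑ j ∈ Finset.range (k + 1), coherentEigenvalue N k j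
      = ∑ j ∈ Finset.range (k + 1),
          ((N + k - j).choose N : ℝ) / ((N + k + 1).choose (N + 1) : ℝ) := by
        refine Finset.sum_congr rfl fun j hj => ?_
        exact eig_term N k j (by simpa [Nat.lt_succ_iff] using hj)
    _ = (∑ j ∈ Finset.range (k + 1), ((N + k - j).choose N : ℝ)) /
          ((N + k + 1).choose (N + 1) : ℝ) := by rw [Finset.sum_div]
    _ = 1 := by
        rw [show (∑ j ∈ Finset.range (k + 1), ((N + k - j).choose N : ℝ)) =
            (((N + k + 1).choose (N + 1) : ℕ) : ℝ) by
          rw [← Nat.cast_sum]; exact_mod_cast congrArg (Nat.cast (R := ℝ)) hsum]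
        exact div_self hpos.ne'

/-- the output `Φ̃^k(|↑⟩_J⟨↑|_J)` of the north-pole coherent state
(`|↑⟩_J = ((2J)!)^{-1/2}(a↑*)^{2J}|0⟩`, i.e. the basis vector `φ_0` of the `N`-particle
sector) is diagonal in the basis
`φ_j = (j!)^{-1/2}((2J+k−j)!)^{-1/2}(a↓*)^j(a↑*)^{2J+k−j}|0⟩`, with eigenvalues
`λ_j^{C,k} = ((2J+1)/(2J+k+1))·k!(2J+k−j)!/((2J+k)!(k−j)!)` for `j ≤ k` and `0` for
`j > k`; these eigenvalues are decreasing in `j` and sum to `1`. -/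
theorem coherent_output_eigenvalues (N k : ℕ) :
    channel N k (Matrix.single 0 0 1) =
      Matrix.diagonal (fun j : Fin (N + k + 1) => (coherentEigenvalue N k j : ℂ)) ∧
    (∀ i j : Fin (N + k + 1), i ≤ j → coherentEigenvalue N k j ≤ coherentEigenvalue N k i) ∧
    ∑ j : Fin (N + k + 1), coherentEigenvalue N k j = 1 := by
  refine ⟨?_, ?_, ?_⟩
  · rw [channel, iterT_diag]
    rw [← Matrix.diagonal_smul]
    refine congrArg Matrix.diagonal (funext fun j => ?_)
    rw [Pi.smul_apply, smul_eq_mul, eig_eq]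
    push_cast
    ring
  · intro i j hij
    exact eig_anti N k (show (i : ℕ) ≤ (j : ℕ) from hij)
  · rw [Fin.sum_univ_eq_sum_range (fun j => coherentEigenvalue N k j) (N + k + 1)]
    rw [← Finset.sum_subset (Finset.range_subset_range.2 (show k + 1 ≤ N + k + 1 by omega))]
    · exact eig_sum N k
    · intro x _ hx'
      simp only [Finset.mem_range] at hx'
      rw [coherentEigenvalue, if_neg (by omega)]
end
end

section
/- Let Γ_m = Σ_{j=0}^m (a↑ |φ_j^{C,k+1}⟩⟨φ_j^{C,k+1}| a↑* + a↓ |φ_j^{C,k+1}⟩⟨φ_j^{C,k+1}| a↓*) for m ≤ k. Then Γ_m = Σ_{j=0}^{m−1} (2J+k+2)|φ_j^{C,k}⟩⟨φ_j^{C,k}| + (2J+k+1−m)|φ_m^{C,k}⟩⟨φ_m^{C,k}|. -/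
open scoped BigOperators ComplexOrder

noncomputable section

lemma sandwich_apply' (n : ℕ) (B : Matrix (Fin (n+2)) (Fin (n+1)) ℂ) (j : Fin (n+2))
    (p q : Fin (n+1)) :
    (B.conjTranspose * Matrix.single j j (1 : ℂ) * B) p q
      = (starRingEnd ℂ) (B j p) * B j q := by
  simp [Matrix.mul_apply, Matrix.single, Matrix.conjTranspose_apply,
    Finset.mul_sum, Finset.sum_ite_eq, ite_and]

lemma sqc' (x : ℝ) (hx : 0 ≤ x) : (Real.sqrt x : ℂ) * Real.sqrt x = (x : ℂ) := by
  norm_cast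
  exact Real.mul_self_sqrt hx

lemma term_apply' (m : ℕ) (n : ℕ) (p q : Fin (n+1)) (j : Fin (n+2)) :
      (if (j : ℕ) ≤ m then
        (aUpStar n).conjTranspose * Matrix.single j j (1 : ℂ) * aUpStar n +
        (aDnStar n).conjTranspose * Matrix.single j j (1 : ℂ) * aDnStar n
      else 0) p q
      = (if (j : ℕ) = (p : ℕ) ∧ p = q ∧ (p : ℕ) ≤ m then ((n : ℂ) + 1 - (p : ℕ)) else 0)
        + (if (j : ℕ) = (p : ℕ) + 1 ∧ p = q ∧ (p : ℕ) + 1 ≤ m then (((p:ℕ) : ℂ) + 1) else 0) := by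
    have hp : (0:ℝ) ≤ (n : ℝ) + 1 - (p : ℕ) := by
      have h := p.isLt
      have h2 : ((p:ℕ):ℝ) < (n:ℝ) + 1 := by exact_mod_cast h
      linarith
    have hq : (0:ℝ) ≤ (n : ℝ) + 1 - (q : ℕ) := by
      have h := q.isLt
      have h2 : ((q:ℕ):ℝ) < (n:ℝ) + 1 := by exact_mod_cast h
      linarith
    have hp1 : (0:ℝ) ≤ ((p:ℕ):ℝ) + 1 := by positivity
    have hq1 : (0:ℝ) ≤ ((q:ℕ):ℝ) + 1 := by positivity

    by_cases hj : (j : ℕ) ≤ m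
    · simp only [hj, if_true, Matrix.add_apply, sandwich_apply', aUpStar, aDnStar, Matrix.of_apply]
      have hpq : (p = q) ↔ ((p:ℕ) = (q:ℕ)) := ⟨fun h => by rw [h], fun h => Fin.ext h⟩
      split_ifs with h1 h2 h3 h4 h5 h6 h7 <;>
        simp_all [Complex.conj_ofReal, sqc']
    · simp only [hj, if_false, Matrix.zero_apply]
      rw [if_neg (by omega), if_neg (by omega), add_zero]

/-- with `φ_j^{C,k}` the orthonormal basis of the `(2J+k)`-particle sector
(here the standard basis of `ℂ^{N+k+1}`, `N = 2J`), the operator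
`Γ_m = Σ_{j=0}^m (a↑|φ_j^{C,k+1}⟩⟨φ_j^{C,k+1}|a↑* + a↓|φ_j^{C,k+1}⟩⟨φ_j^{C,k+1}|a↓*)`
equals `Σ_{j=0}^{m−1}(2J+k+2)|φ_j^{C,k}⟩⟨φ_j^{C,k}| + (2J+k+1−m)|φ_m^{C,k}⟩⟨φ_m^{C,k}|`
for `m ≤ k`. -/
theorem gamma_identity (N k m : ℕ) (hm : m ≤ k) :
    ∑ j : Fin (N + k + 2),
      (if (j : ℕ) ≤ m then
        (aUpStar (N + k)).conjTranspose * Matrix.single j j (1 : ℂ) * aUpStar (N + k) +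
        (aDnStar (N + k)).conjTranspose * Matrix.single j j (1 : ℂ) * aDnStar (N + k)
      else 0) =
    Matrix.diagonal (fun j : Fin (N + k + 1) =>
      if (j : ℕ) < m then ((N : ℂ) + k + 2)
      else if (j : ℕ) = m then ((N : ℂ) + k + 1 - m) else 0) := by
  set n := N + k with hn
  ext p q
  rw [Matrix.sum_apply]
  simp only [term_apply']
  rw [Finset.sum_add_distrib]
  rw [Fin.sum_univ_eq_sum_range
      (fun a => if a = (p:ℕ) ∧ p = q ∧ (p:ℕ) ≤ m then ((n:ℂ)+1-((p:ℕ):ℂ)) else 0),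
    Fin.sum_univ_eq_sum_range
      (fun a => if a = (p:ℕ)+1 ∧ p = q ∧ (p:ℕ)+1 ≤ m then (((p:ℕ):ℂ)+1) else 0)]
  simp only [ite_and]
  rw [Finset.sum_ite_eq' (Finset.range (n+2)) (p:ℕ),
    Finset.sum_ite_eq' (Finset.range (n+2)) ((p:ℕ)+1)]
  have h1 : (p:ℕ) ∈ Finset.range (n+2) := by
    have := p.isLt; simp only [Finset.mem_range]; omega
  have h2 : (p:ℕ)+1 ∈ Finset.range (n+2) := by
    have := p.isLt; simp only [Finset.mem_range]; omega
  rw [if_pos h1, if_pos h2, Matrix.diagonal_apply]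
  by_cases hpq : p = q
  · subst hpq
    simp only [eq_self_iff_true, true_and, if_true]
    have hNk : ((n:ℕ):ℂ) = (N:ℂ) + k := by push_cast [hn]; ring
    split_ifs with ha hb hc hd he hf hg hh <;>
      try (exfalso; omega)
    · push_cast [hNk]; ring
    · simp only [hf]; push_cast [hNk]; ring
    · ring
  · simp [hpq]
end
end

section
/- Lower symbol intertwining: for a density matrix ρ on ℋ_J and k = 2(K−J) ≥ 0, the lower symbol of the channel output satisfies ⟨ω|Φ̃^k(ρ)|ω⟩_K = ((2J+1)/(2K+1)) ⟨ω|ρ|ω⟩_J for all ω ∈ S². -/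
open scoped BigOperators ComplexOrder

noncomputable section

/-- The spin-up component of the (unit) spinor associated to a point of the sphere `S²`. -/
def spinorUp (ω : EuclideanSpace ℝ (Fin 3)) : ℂ :=
  (Real.sqrt ((1 + ω 2) / 2) : ℝ)

/-- The spin-down component of the (unit) spinor associated to a point of the sphere `S²`. -/
def spinorDn (ω : EuclideanSpace ℝ (Fin 3)) : ℂ :=
  if ω 2 = -1 then 1
  else ((ω 0 : ℂ) + (ω 1 : ℂ) * Complex.I) / (Real.sqrt (2 * (1 + ω 2)) : ℝ)

/-- The Bloch coherent state `|ω⟩_J` for spin `J = n/2`, realized in `ℂ^{n+1}`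
(in the basis `φ_j` of the `n`-particle Schwinger boson sector). -/
def bloch (n : ℕ) (ω : EuclideanSpace ℝ (Fin 3)) : Fin (n + 1) → ℂ :=
  fun j => (Real.sqrt (n.choose j) : ℂ) * spinorUp ω ^ (n - (j : ℕ)) * spinorDn ω ^ (j : ℕ)

/-- Unit sphere in coordinates. -/
lemma sphere_coords (ω : EuclideanSpace ℝ (Fin 3))
    (hω : ω ∈ Metric.sphere (0 : EuclideanSpace ℝ (Fin 3)) 1) :
    (ω 0)^2 + (ω 1)^2 + (ω 2)^2 = 1 := by
  have h : ‖ω‖ = 1 := by simpa using hω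
  have this' : ‖ω‖ = Real.sqrt (∑ i, ω i ^ 2) := by
    rw [EuclideanSpace.norm_eq]
    congr 1
    exact Finset.sum_congr rfl fun i _ => by rw [Real.norm_eq_abs, sq_abs]
  rw [h] at this'
  have h2 : Real.sqrt (∑ i, ω i ^ 2) = 1 := this'.symm
  have hnn : (0:ℝ) ≤ ∑ i, ω i ^ 2 := Finset.sum_nonneg fun i _ => sq_nonneg _
  have h3 : (∑ i, ω i ^ 2) = 1 := by nlinarith [Real.sq_sqrt hnn, h2]
  simpa [Fin.sum_univ_three] using h3

/-- Normalization of the spinor. -/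
lemma spinor_norm (ω : EuclideanSpace ℝ (Fin 3))
    (hω : ω ∈ Metric.sphere (0 : EuclideanSpace ℝ (Fin 3)) 1) :
    star (spinorUp ω) * spinorUp ω + star (spinorDn ω) * spinorDn ω = 1 := by
  have hs := sphere_coords ω hω
  have hle : -1 ≤ ω 2 := by nlinarith [sq_nonneg (ω 0), sq_nonneg (ω 1)]
  have hup : star (spinorUp ω) * spinorUp ω = ((1 + ω 2) / 2 : ℝ) := by
    rw [spinorUp]
    simp only [Complex.star_def, Complex.conj_ofReal]
    rw [← Complex.ofReal_mul]
    exact congrArg Complex.ofReal (Real.mul_self_sqrt (by linarith : (0:ℝ) ≤ (1 + ω 2)/2))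
  by_cases h2 : ω 2 = -1
  · have h0 : ω 0 = 0 := by nlinarith [sq_nonneg (ω 1)]
    have h1 : ω 1 = 0 := by nlinarith [sq_nonneg (ω 0)]
    rw [hup, spinorDn, if_pos h2, h2]
    norm_num
  · have hlt : -1 < ω 2 := lt_of_le_of_ne hle (Ne.symm h2)
    have hpos : 0 < 2 * (1 + ω 2) := by linarith
    have hdn : star (spinorDn ω) * spinorDn ω = (((ω 0)^2 + (ω 1)^2) / (2 * (1 + ω 2)) : ℝ) := by
      rw [spinorDn, if_neg h2]
      simp only [Complex.star_def]
      rw [mul_comm, Complex.mul_conj]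
      have hns : Complex.normSq (((ω 0 : ℂ) + (ω 1 : ℂ) * Complex.I)
          / (Real.sqrt (2 * (1 + ω 2)) : ℝ)) = ((ω 0)^2 + (ω 1)^2) / (2 * (1 + ω 2)) := by
        rw [map_div₀, Complex.normSq_add_mul_I, Complex.normSq_ofReal,
          Real.mul_self_sqrt (le_of_lt hpos)]
      rw [hns]
    rw [hup, hdn]
    have hxy : (ω 0)^2 + (ω 1)^2 = (1 - ω 2) * (1 + ω 2) := by nlinarith
    rw [hxy]
    rw [← Complex.ofReal_add, ← Complex.ofReal_one]
    congr 1
    have hne : (1 + ω 2) ≠ 0 := by linarith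
    field_simp
    ring

/-- Action of `(a↑*)ᴴ` on a Bloch vector. -/
lemma up_mulVec (n : ℕ) (ω : EuclideanSpace ℝ (Fin 3)) :
    (aUpStar n).conjTranspose.mulVec (bloch (n + 1) ω)
      = ((Real.sqrt (n + 1) : ℂ) * spinorUp ω) • bloch n ω := by
  funext j
  have hj : (j : ℕ) < n + 2 := lt_of_lt_of_le j.isLt (by omega)
  have hsum : (aUpStar n).conjTranspose.mulVec (bloch (n + 1) ω) j
      = star ((aUpStar n) ⟨j, hj⟩ j) * bloch (n + 1) ω ⟨j, hj⟩ := by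
    rw [Matrix.mulVec, dotProduct]
    rw [Finset.sum_eq_single (⟨(j:ℕ), hj⟩ : Fin (n+2))]
    · rfl
    · intro i _ hne
      have : (i : ℕ) ≠ (j : ℕ) := fun h => hne (Fin.ext h)
      simp [Matrix.conjTranspose_apply, aUpStar, this]
    · intro h; exact absurd (Finset.mem_univ _) h
  rw [hsum]
  simp only [aUpStar, Matrix.of_apply, if_pos rfl, if_true, bloch, Pi.smul_apply, smul_eq_mul,
    Complex.star_def, Complex.conj_ofReal]
  have hjn : (j : ℕ) ≤ n := Nat.lt_succ_iff.mp j.isLt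
  have hcast : ((n:ℝ) + 1 - (j:ℕ)) = ((n + 1 - (j:ℕ) : ℕ) : ℝ) := by
    rw [Nat.cast_sub (by omega)]; push_cast; ring
  have hnat : (n + 1 - (j:ℕ)) * (n+1).choose j = (n + 1) * n.choose j := by
    calc (n + 1 - (j:ℕ)) * (n+1).choose j = n.choose j * (n + 1) := by
          rw [mul_comm]; exact (Nat.choose_mul_succ_eq n (j:ℕ)).symm
      _ = (n + 1) * n.choose j := mul_comm _ _
  have hkey : Real.sqrt ((n:ℝ) + 1 - (j:ℕ)) * Real.sqrt ((n+1).choose j)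
      = Real.sqrt (n + 1) * Real.sqrt (n.choose j) := by
    rw [hcast, show ((n:ℝ) + 1) = ((n + 1 : ℕ) : ℝ) by push_cast; ring,
      ← Real.sqrt_mul (Nat.cast_nonneg _), ← Real.sqrt_mul (Nat.cast_nonneg _),
      ← Nat.cast_mul, ← Nat.cast_mul, hnat]
  have hpow : spinorUp ω ^ (n + 1 - (j : ℕ)) = spinorUp ω * spinorUp ω ^ (n - (j : ℕ)) := by
    have : n + 1 - (j : ℕ) = (n - (j : ℕ)) + 1 := by omega
    rw [this, pow_succ]; ring
  rw [hpow]
  have hC : ((Real.sqrt ((n:ℝ) + 1 - (j:ℕ)) : ℝ) : ℂ) * ((Real.sqrt ((n+1).choose j) : ℝ) : ℂ)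
      = ((Real.sqrt (n + 1) : ℝ) : ℂ) * ((Real.sqrt (n.choose j) : ℝ) : ℂ) := by
    rw [← Complex.ofReal_mul, ← Complex.ofReal_mul, hkey]
  linear_combination (spinorUp ω * spinorUp ω ^ (n - (j:ℕ)) * spinorDn ω ^ (j:ℕ)) * hC

/-- Action of `(a↓*)ᴴ` on a Bloch vector. -/
lemma dn_mulVec (n : ℕ) (ω : EuclideanSpace ℝ (Fin 3)) :
    (aDnStar n).conjTranspose.mulVec (bloch (n + 1) ω)
      = ((Real.sqrt (n + 1) : ℂ) * spinorDn ω) • bloch n ω := by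
  funext j
  have hj : (j : ℕ) + 1 < n + 2 := by have := j.isLt; omega
  have hsum : (aDnStar n).conjTranspose.mulVec (bloch (n + 1) ω) j
      = star ((aDnStar n) ⟨(j:ℕ)+1, hj⟩ j) * bloch (n + 1) ω ⟨(j:ℕ)+1, hj⟩ := by
    rw [Matrix.mulVec, dotProduct]
    rw [Finset.sum_eq_single (⟨(j:ℕ)+1, hj⟩ : Fin (n+2))]
    · rfl
    · intro i _ hne
      have : (i : ℕ) ≠ (j : ℕ) + 1 := fun h => hne (Fin.ext h)
      simp [Matrix.conjTranspose_apply, aDnStar, this]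
    · intro h; exact absurd (Finset.mem_univ _) h
  rw [hsum]
  simp only [aDnStar, Matrix.of_apply, if_pos rfl, if_true, bloch, Pi.smul_apply, smul_eq_mul,
    Complex.star_def, Complex.conj_ofReal]
  have hjn : (j : ℕ) ≤ n := Nat.lt_succ_iff.mp j.isLt
  have hnat : ((j:ℕ) + 1) * (n+1).choose ((j:ℕ)+1) = (n + 1) * n.choose j := by
    calc ((j:ℕ) + 1) * (n+1).choose ((j:ℕ)+1) = (n+1).choose ((j:ℕ)+1) * ((j:ℕ)+1) :=
          mul_comm _ _
      _ = (n + 1) * n.choose j := (Nat.add_one_mul_choose_eq n (j:ℕ)).symm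
  have hkey : Real.sqrt (((j:ℕ) : ℝ) + 1) * Real.sqrt ((n+1).choose ((j:ℕ)+1))
      = Real.sqrt (n + 1) * Real.sqrt (n.choose j) := by
    rw [show (((j:ℕ):ℝ) + 1) = (((j:ℕ) + 1 : ℕ) : ℝ) by push_cast; ring,
      show ((n:ℝ) + 1) = ((n + 1 : ℕ) : ℝ) by push_cast; ring,
      ← Real.sqrt_mul (Nat.cast_nonneg _), ← Real.sqrt_mul (Nat.cast_nonneg _),
      ← Nat.cast_mul, ← Nat.cast_mul, hnat]
  have hup : n + 1 - ((j:ℕ) + 1) = n - (j:ℕ) := by omega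
  rw [hup, pow_succ]
  have hC : ((Real.sqrt (((j:ℕ):ℝ) + 1) : ℝ) : ℂ) * ((Real.sqrt ((n+1).choose ((j:ℕ)+1)) : ℝ) : ℂ)
      = ((Real.sqrt (n + 1) : ℝ) : ℂ) * ((Real.sqrt (n.choose j) : ℝ) : ℂ) := by
    rw [← Complex.ofReal_mul, ← Complex.ofReal_mul, hkey]
  linear_combination (spinorUp ω ^ (n - (j:ℕ)) * (spinorDn ω ^ (j:ℕ) * spinorDn ω)) * hC

/-- Sandwich identity for lower symbols. -/
lemma sandwich {m l : ℕ} (A : Matrix (Fin m) (Fin l) ℂ) (ρ : Matrix (Fin l) (Fin l) ℂ)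
    (w : Fin m → ℂ) :
    dotProduct (star w) ((A * ρ * A.conjTranspose).mulVec w)
      = dotProduct (star (A.conjTranspose.mulVec w))
          (ρ.mulVec (A.conjTranspose.mulVec w)) := by
  rw [← Matrix.mulVec_mulVec, ← Matrix.mulVec_mulVec, Matrix.dotProduct_mulVec]
  congr 1
  rw [Matrix.star_mulVec, Matrix.conjTranspose_conjTranspose]

/-- Lower symbol of one Kraus step. -/
lemma step_symbol (n : ℕ) (ρ : Matrix (Fin (n + 1)) (Fin (n + 1)) ℂ)
    (ω : EuclideanSpace ℝ (Fin 3))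
    (hnorm : star (spinorUp ω) * spinorUp ω + star (spinorDn ω) * spinorDn ω = 1) :
    dotProduct (star (bloch (n + 1) ω)) ((stepT n ρ).mulVec (bloch (n + 1) ω))
      = ((n : ℝ) + 1 : ℂ) *
        dotProduct (star (bloch n ω)) (ρ.mulVec (bloch n ω)) := by
  rw [stepT, Matrix.add_mulVec, dotProduct_add, sandwich, sandwich,
    up_mulVec, dn_mulVec]
  simp only [star_smul, smul_dotProduct, Matrix.mulVec_smul, dotProduct_smul,
    smul_eq_mul, star_mul']
  have hsq : (Real.sqrt (n + 1) : ℂ) * (Real.sqrt (n + 1) : ℂ) = ((n : ℝ) + 1 : ℂ) := by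
    rw [← Complex.ofReal_mul, Real.mul_self_sqrt (by positivity)]
    norm_num
  have hst : star ((Real.sqrt (n+1) : ℝ) : ℂ) = ((Real.sqrt (n+1) : ℝ) : ℂ) := by
    simp only [Complex.star_def, Complex.conj_ofReal]
  set s := dotProduct (star (bloch n ω)) (ρ.mulVec (bloch n ω)) with hs
  simp only [hst]
  linear_combination ((star (spinorUp ω) * spinorUp ω + star (spinorDn ω) * spinorDn ω) * s) * hsq
    + (((n : ℝ) + 1 : ℂ) * s) * hnorm

/-- Lower symbol of the iterated Kraus map. -/
lemma iter_symbol (N : ℕ) (ρ : Matrix (Fin (N + 1)) (Fin (N + 1)) ℂ)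
    (ω : EuclideanSpace ℝ (Fin 3))
    (hnorm : star (spinorUp ω) * spinorUp ω + star (spinorDn ω) * spinorDn ω = 1) :
    ∀ k : ℕ,
    dotProduct (star (bloch (N + k) ω)) ((iterT N k ρ).mulVec (bloch (N + k) ω))
      = ((((N + k).factorial : ℝ) / (N.factorial : ℝ)) : ℂ) *
        dotProduct (star (bloch N ω)) (ρ.mulVec (bloch N ω)) := by
  have hN : ((N.factorial : ℝ) : ℂ) ≠ 0 := by
    simp only [ne_eq, Complex.ofReal_eq_zero, Nat.cast_eq_zero]
    exact Nat.factorial_ne_zero N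
  intro k
  induction k with
  | zero =>
    show dotProduct (star (bloch N ω)) (ρ.mulVec (bloch N ω))
        = (((N.factorial : ℝ)) : ℂ) / (((N.factorial : ℝ)) : ℂ) *
          dotProduct (star (bloch N ω)) (ρ.mulVec (bloch N ω))
    rw [div_self hN, one_mul]
  | succ k ih =>
    show dotProduct (star (bloch ((N + k) + 1) ω))
        ((stepT (N + k) (iterT N k ρ)).mulVec (bloch ((N + k) + 1) ω))
      = (((((N + k) + 1).factorial : ℝ) / (N.factorial : ℝ)) : ℂ) *
        dotProduct (star (bloch N ω)) (ρ.mulVec (bloch N ω))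
    rw [step_symbol (N + k) (iterT N k ρ) ω hnorm, ih, ← mul_assoc]
    congr 1
    rw [Nat.factorial_succ]
    push_cast
    field_simp

/-- lower symbol intertwining: for a density matrix `ρ` on `ℋ_J`
(`N = 2J`) and `k = 2(K−J) ≥ 0`, the lower symbol of the channel output satisfies
`⟨ω|Φ̃^k(ρ)|ω⟩_K = ((2J+1)/(2K+1)) ⟨ω|ρ|ω⟩_J` for all `ω ∈ S²`. -/
theorem lower_symbol_intertwine (N k : ℕ)
    (ρ : Matrix (Fin (N + 1)) (Fin (N + 1)) ℂ)
    (hρ : ρ.PosSemidef) (htr : ρ.trace = 1)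
    (ω : EuclideanSpace ℝ (Fin 3)) (hω : ω ∈ Metric.sphere (0 : EuclideanSpace ℝ (Fin 3)) 1) :
    dotProduct (star (bloch (N + k) ω)) ((channel N k ρ).mulVec (bloch (N + k) ω)) =
      (((N : ℝ) + 1) / ((N : ℝ) + k + 1) : ℂ) *
        dotProduct (star (bloch N ω)) (ρ.mulVec (bloch N ω)) := by
  rw [channel, Matrix.smul_mulVec, dotProduct_smul,
    iter_symbol N ρ ω (spinor_norm ω hω) k]
  rw [smul_eq_mul, ← mul_assoc]
  congr 1
  have hN : ((N.factorial : ℂ)) ≠ 0 := by exact_mod_cast Nat.factorial_ne_zero N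
  have hNk : (((N + k).factorial : ℂ)) ≠ 0 := by exact_mod_cast Nat.factorial_ne_zero (N + k)
  have hd : ((N : ℂ) + k + 1) ≠ 0 := by
    have h1 : ((N + k + 1 : ℕ) : ℂ) ≠ 0 := Nat.cast_ne_zero.mpr (Nat.succ_ne_zero _)
    push_cast at h1
    exact h1
  have hd1 : ((N : ℂ) + 1) ≠ 0 := by
    have h1 : ((N + 1 : ℕ) : ℂ) ≠ 0 := Nat.cast_ne_zero.mpr (Nat.succ_ne_zero _)
    push_cast at h1
    exact h1
  rw [show N + k + 1 = (N + k) + 1 from rfl, Nat.factorial_succ (N + k), Nat.factorial_succ N]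
  push_cast
  field_simp
end
end

section
/- Classical (K → ∞) limit of coherent outputs: for any continuous f : [0,1] → ℝ, lim_{K→∞} ((2J+1)/(2K+1)) Σ_{j=0}^{2(K−J)} f( (2(K−J))!(2K−j)!/((2K)!(2(K−J)−j)!) ) = (2J+1) ∫_0^1 f(t^{2J}) dt. -/
open scoped BigOperators

open Filter Set Finset

lemma aux_pow_sub_pow_le (N : ℕ) {a b : ℝ} (hb : 0 ≤ b) (hba : b ≤ a) (ha : a ≤ 1) :
    a ^ N - b ^ N ≤ N * (a - b) := by
  induction N with
  | zero => simp
  | succ n ih =>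
    have hb' : b ^ n ≤ a ^ n := pow_le_pow_left₀ hb hba n
    have han : a ^ n ≤ 1 := pow_le_one₀ (hb.trans hba) ha
    have hbn : 0 ≤ b ^ n := pow_nonneg hb n
    have h1 : a ^ (n+1) - b ^ (n+1) = a * (a^n - b^n) + b^n * (a - b) := by ring
    have h2 : a * (a^n - b^n) ≤ 1 * (a^n - b^n) :=
      mul_le_mul_of_nonneg_right ha (by linarith)
    have h3 : b^n * (a - b) ≤ 1 * (a - b) :=
      mul_le_mul_of_nonneg_right (pow_le_one₀ hb (hba.trans ha)) (by linarith)
    push_cast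
    nlinarith

lemma aux_lam_prod (k m : ℕ) (N : ℕ) :
    ((k.factorial : ℝ) * ((N + m).factorial : ℝ)) /
      (((N + k).factorial : ℝ) * (m.factorial : ℝ))
      = ∏ i ∈ Finset.range N, (((m : ℝ) + i + 1) / ((k : ℝ) + i + 1)) := by
  induction N with
  | zero =>
    simp only [Nat.zero_add, Finset.range_zero, Finset.prod_empty]
    rw [div_self]
    positivity
  | succ n ih =>
    have h1 : (n + 1 + m) = (n + m) + 1 := by ring
    have h2 : (n + 1 + k) = (n + k) + 1 := by ring
    rw [h1, h2, Nat.factorial_succ, Nat.factorial_succ, Finset.prod_range_succ, ← ih]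
    push_cast
    have hk : ((n + k).factorial : ℝ) ≠ 0 := Nat.cast_ne_zero.2 (Nat.factorial_pos _).ne'
    have hm : ((m).factorial : ℝ) ≠ 0 := Nat.cast_ne_zero.2 (Nat.factorial_pos _).ne'
    have hkf : ((k).factorial : ℝ) ≠ 0 := Nat.cast_ne_zero.2 (Nat.factorial_pos _).ne'
    have hmn : ((n + m).factorial : ℝ) ≠ 0 := Nat.cast_ne_zero.2 (Nat.factorial_pos _).ne'
    have hk1 : ((n:ℝ) + k + 1) ≠ 0 := by positivity
    field_simp
    ring

lemma aux_lam_mem (N k j : ℕ) (hj : j ≤ k) (hpos : 0 < N + k) :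
    (((k - j : ℕ) : ℝ) / ((N : ℝ) + k)) ^ N
      ≤ ((k.factorial : ℝ) * ((N + k - j).factorial : ℝ)) /
          (((N + k).factorial : ℝ) * ((k - j).factorial : ℝ)) ∧
    ((k.factorial : ℝ) * ((N + k - j).factorial : ℝ)) /
          (((N + k).factorial : ℝ) * ((k - j).factorial : ℝ))
      ≤ ((((k - j : ℕ) : ℝ) + N) / ((N : ℝ) + k)) ^ N := by
  have hsub : N + k - j = N + (k - j) := by omega
  rw [hsub, aux_lam_prod k (k - j) N]
  set m : ℝ := ((k - j : ℕ) : ℝ) with hm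
  have hm0 : 0 ≤ m := Nat.cast_nonneg _
  have hmk : m ≤ (k : ℝ) := by
    rw [hm]; exact_mod_cast Nat.sub_le k j
  have hn : (0 : ℝ) < (N : ℝ) + k := by exact_mod_cast hpos
  have hfac : ∀ i ∈ Finset.range N,
      m / ((N : ℝ) + k) ≤ (m + i + 1) / ((k : ℝ) + i + 1) ∧
      (m + i + 1) / ((k : ℝ) + i + 1) ≤ (m + N) / ((N : ℝ) + k) := by
    intro i hi
    rw [Finset.mem_range] at hi
    have hiN : (i : ℝ) + 1 ≤ N := by exact_mod_cast Nat.succ_le_of_lt hi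
    have hi0 : (0 : ℝ) ≤ i := Nat.cast_nonneg _
    have hd : (0 : ℝ) < (k : ℝ) + i + 1 := by positivity
    constructor
    · rw [div_le_div_iff₀ hn hd]; nlinarith
    · rw [div_le_div_iff₀ hd hn]; nlinarith
  constructor
  · calc (m / ((N : ℝ) + k)) ^ N
        = ∏ _i ∈ Finset.range N, m / ((N : ℝ) + k) := by
          rw [Finset.prod_const, Finset.card_range]
      _ ≤ ∏ i ∈ Finset.range N, (m + i + 1) / ((k : ℝ) + i + 1) := by
          apply Finset.prod_le_prod
          · intro i _; positivity
          · intro i hi; exact (hfac i hi).1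
  · calc ∏ i ∈ Finset.range N, (m + i + 1) / ((k : ℝ) + i + 1)
        ≤ ∏ _i ∈ Finset.range N, (m + N) / ((N : ℝ) + k) := by
          apply Finset.prod_le_prod
          · intro i _; positivity
          · intro i hi; exact (hfac i hi).2
      _ = ((m + N) / ((N : ℝ) + k)) ^ N := by
          rw [Finset.prod_const, Finset.card_range]

lemma aux_riemann (h : ℝ → ℝ) (hh : ContinuousOn h (Set.Icc 0 1)) :
    Filter.Tendsto (fun n : ℕ => (1 / (n : ℝ)) * ∑ i ∈ Finset.range n, h (i / n))
      Filter.atTop (nhds (∫ t in (0:ℝ)..1, h t)) := by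
  rw [Metric.tendsto_atTop]
  intro ε hε
  have huc : UniformContinuousOn h (Set.Icc 0 1) :=
    isCompact_Icc.uniformContinuousOn_of_continuous hh
  rw [Metric.uniformContinuousOn_iff] at huc
  obtain ⟨δ, hδ, H⟩ := huc (ε / 2) (by linarith)
  obtain ⟨n₀, hn₀⟩ := exists_nat_gt (1 / δ)
  refine ⟨n₀ + 1, fun n hn => ?_⟩
  have hn1 : 1 ≤ n := le_trans (Nat.le_add_left 1 n₀) hn
  have hnR : (0 : ℝ) < n := by exact_mod_cast hn1
  have hinv : 1 / (n : ℝ) < δ := by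
    rw [div_lt_iff₀ hnR]
    have : 1 / δ < n := lt_of_lt_of_le hn₀ (by exact_mod_cast le_trans (Nat.le_succ n₀) hn)
    rw [div_lt_iff₀ hδ] at this
    linarith [mul_comm δ (n : ℝ)]
  have hmem : ∀ i ∈ Finset.range n, Set.uIcc ((i : ℝ) / n) (((i : ℝ) + 1) / n) ⊆ Set.Icc 0 1 := by
    intro i hi
    rw [Finset.mem_range] at hi
    rw [Set.uIcc_of_le (by apply div_le_div_of_nonneg_right _ hnR.le; linarith)]
    apply Set.Icc_subset_Icc
    · positivity
    · rw [div_le_one hnR]; exact_mod_cast hi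
  have hint : ∀ i ∈ Finset.range n,
      IntervalIntegrable h MeasureTheory.volume ((i : ℝ) / n) (((i : ℝ) + 1) / n) := by
    intro i hi
    exact (hh.mono (hmem i hi)).intervalIntegrable
  have hint' : ∀ i < n,
      IntervalIntegrable h MeasureTheory.volume
        ((fun i : ℕ => (i : ℝ) / n) i) ((fun i : ℕ => (i : ℝ) / n) (i + 1)) := by
    intro i hi
    have := hint i (Finset.mem_range.mpr hi)
    simpa [Nat.cast_add] using this
  have hsplit : ∑ i ∈ Finset.range n,
      ∫ t in ((i : ℝ)/n)..(((i : ℝ)+1)/n), h t = ∫ t in (0:ℝ)..1, h t := by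
    have := intervalIntegral.sum_integral_adjacent_intervals (μ := MeasureTheory.volume)
      (a := fun i : ℕ => (i : ℝ) / n) (f := h) hint'
    simp only [Nat.cast_zero, zero_div, Nat.cast_add, Nat.cast_one] at this
    rw [div_self hnR.ne'] at this
    exact this
  rw [dist_eq_norm, Finset.mul_sum, ← hsplit, ← Finset.sum_sub_distrib]
  have hterm : ∀ i ∈ Finset.range n,
      ‖1 / (n:ℝ) * h (i / n) - ∫ t in ((i : ℝ)/n)..(((i : ℝ)+1)/n), h t‖ ≤ ε / 2 * (1 / n) := by
    intro i hi
    have hconst : (∫ t in ((i : ℝ)/n)..(((i : ℝ)+1)/n), h ((i:ℝ)/n))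
        = 1 / (n:ℝ) * h ((i:ℝ)/n) := by
      rw [intervalIntegral.integral_const]
      have : ((i : ℝ)+1)/n - (i:ℝ)/n = 1 / n := by field_simp; ring
      rw [this]; simp [smul_eq_mul]
    rw [← hconst, ← intervalIntegral.integral_sub (by simp) (hint i hi)]
    have := intervalIntegral.norm_integral_le_of_norm_le_const
      (f := fun t => h ((i:ℝ)/n) - h t) (a := (i : ℝ)/n) (b := ((i : ℝ)+1)/n) (C := ε/2) ?_
    · calc ‖∫ t in ((i : ℝ)/n)..(((i : ℝ)+1)/n), (h ((i:ℝ)/n) - h t)‖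
          ≤ ε/2 * |((i : ℝ)+1)/n - (i:ℝ)/n| := this
        _ = ε/2 * (1/n) := by
            congr 1
            rw [abs_of_nonneg (by rw [sub_nonneg]; apply div_le_div_of_nonneg_right _ hnR.le; linarith)]
            field_simp; ring
    · intro t ht
      have hIoc : t ∈ Set.Ioc ((i:ℝ)/n) (((i : ℝ)+1)/n) := by
        rwa [Set.uIoc_of_le (by apply div_le_div_of_nonneg_right _ hnR.le; linarith)] at ht
      have hle : (i:ℝ)/n ≤ ((i:ℝ)+1)/n := by
        apply div_le_div_of_nonneg_right _ hnR.le; linarith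
      have ht1 : t ∈ Set.Icc (0:ℝ) 1 := by
        apply hmem i hi
        rw [Set.uIcc_of_le hle]
        exact ⟨hIoc.1.le, hIoc.2⟩
      have hx1 : (i:ℝ)/n ∈ Set.Icc (0:ℝ) 1 := by
        apply hmem i hi
        rw [Set.uIcc_of_le hle]
        exact ⟨le_refl _, hle⟩
      have hdist : dist ((i:ℝ)/n) t < δ := by
        rw [Real.dist_eq, abs_sub_comm, abs_of_nonneg (by linarith [hIoc.1.le])]
        have : t ≤ ((i:ℝ)+1)/n := hIoc.2
        have h2 : ((i:ℝ)+1)/n - (i:ℝ)/n = 1/n := by field_simp; ring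
        linarith [hIoc.1]
      have := H _ hx1 _ ht1 hdist
      rw [Real.dist_eq] at this
      exact le_of_lt this
  calc ‖∑ i ∈ Finset.range n, (1 / (n:ℝ) * h (i / n) - ∫ t in ((i : ℝ)/n)..(((i : ℝ)+1)/n), h t)‖
      ≤ ∑ i ∈ Finset.range n, ‖1 / (n:ℝ) * h (i / n) - ∫ t in ((i : ℝ)/n)..(((i : ℝ)+1)/n), h t‖ :=
        norm_sum_le _ _
    _ ≤ ∑ _i ∈ Finset.range n, ε / 2 * (1 / n) := Finset.sum_le_sum hterm
    _ = ε / 2 := by rw [Finset.sum_const, Finset.card_range, nsmul_eq_mul]; field_simp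
    _ < ε := by linarith

/-- classical `K → ∞` limit of coherent outputs: for fixed `N = 2J` and
continuous `f : [0,1] → ℝ`, as `k = 2(K−J) → ∞`,
`((2J+1)/(2K+1)) Σ_{j=0}^{k} f( k!(2K−j)!/((2K)!(k−j)!) ) → (2J+1) ∫₀¹ f(t^{2J}) dt`
(here `2K = N + k`, and the arguments of `f` are the rescaled coherent output
eigenvalues `((2K+1)/(2J+1))·λ_j^{C,k}`). -/
theorem classical_limit_coherent_output (N : ℕ) (f : ℝ → ℝ)
    (hf : ContinuousOn f (Set.Icc 0 1)) :
    Filter.Tendsto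
      (fun k : ℕ =>
        (((N : ℝ) + 1) / ((N : ℝ) + k + 1)) *
          ∑ j ∈ Finset.range (k + 1),
            f (((k.factorial : ℝ) * ((N + k - j).factorial : ℝ)) /
              (((N + k).factorial : ℝ) * ((k - j).factorial : ℝ))))
      Filter.atTop
      (nhds (((N : ℝ) + 1) * ∫ t in (0 : ℝ)..1, f (t ^ N))) := by
  -- the case N = 0 is trivial
  rcases Nat.eq_zero_or_pos N with hN0 | hN1
  · subst hN0
    have heq : ∀ k : ℕ,
        (((0 : ℕ) : ℝ) + 1) / (((0 : ℕ) : ℝ) + k + 1) *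
          ∑ j ∈ Finset.range (k + 1),
            f (((k.factorial : ℝ) * ((0 + k - j).factorial : ℝ)) /
              (((0 + k).factorial : ℝ) * ((k - j).factorial : ℝ))) = f 1 := by
      intro k
      have hk1 : ((k : ℝ) + 1) ≠ 0 := by positivity
      have : ∀ j ∈ Finset.range (k + 1),
          f (((k.factorial : ℝ) * ((0 + k - j).factorial : ℝ)) /
            (((0 + k).factorial : ℝ) * ((k - j).factorial : ℝ))) = f 1 := by
        intro j _
        congr 1
        simp only [Nat.zero_add]
        rw [div_self]
        positivity
      rw [Finset.sum_congr rfl this, Finset.sum_const, Finset.card_range]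
      push_cast
      field_simp
      rw [nsmul_eq_mul]; push_cast; ring
    have hint : (∫ t in (0:ℝ)..1, f (t ^ 0)) = f 1 := by
      simp [intervalIntegral.integral_const]
    rw [show (((0:ℕ):ℝ) + 1) * ∫ t in (0:ℝ)..1, f (t ^ 0) = f 1 by rw [hint]; push_cast; ring]
    exact Filter.Tendsto.congr (fun k => (heq k).symm) tendsto_const_nhds
  -- main case N ≥ 1
  set h : ℝ → ℝ := fun t => f (t ^ N) with hh_def
  have hh : ContinuousOn h (Set.Icc 0 1) := by
    apply hf.comp ((continuous_pow N).continuousOn)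
    intro x hx
    exact ⟨pow_nonneg hx.1 N, pow_le_one₀ hx.1 hx.2⟩
  set A : ℕ → ℝ := fun k => (1 / ((N : ℝ) + k + 1)) *
      ∑ j ∈ Finset.range (k + 1),
        f (((k.factorial : ℝ) * ((N + k - j).factorial : ℝ)) /
          (((N + k).factorial : ℝ) * ((k - j).factorial : ℝ))) with hA_def
  set B : ℕ → ℝ := fun k => (1 / ((N : ℝ) + k + 1)) *
      ∑ j ∈ Finset.range (k + 1), h (((k - j : ℕ) : ℝ) / ((N : ℝ) + k)) with hB_def
  set R : ℕ → ℝ := fun n => (1 / (n : ℝ)) * ∑ i ∈ Finset.range n, h ((i : ℝ) / n) with hR_def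
  have hRlim : Filter.Tendsto (fun k : ℕ => R (N + k)) Filter.atTop
      (nhds (∫ t in (0:ℝ)..1, h t)) :=
    (aux_riemann h hh).comp (tendsto_atTop_mono (fun k => Nat.le_add_left k N) tendsto_id)
  -- uniform continuity of f
  have huc : UniformContinuousOn f (Set.Icc 0 1) :=
    isCompact_Icc.uniformContinuousOn_of_continuous hf
  rw [Metric.uniformContinuousOn_iff] at huc
  -- step 1 : A - B → 0
  have h1 : Filter.Tendsto (fun k => A k - B k) Filter.atTop (nhds 0) := by
    rw [Metric.tendsto_atTop]
    intro ε hε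
    obtain ⟨δ, hδ, H⟩ := huc (ε / 2) (by linarith)
    obtain ⟨k₀, hk₀⟩ := exists_nat_gt ((N : ℝ) ^ 2 / δ)
    refine ⟨k₀ + 1, fun k hk => ?_⟩
    have hk1 : 1 ≤ k := le_trans (Nat.le_add_left 1 k₀) hk
    have hkpos : 0 < N + k := by omega
    have hnR : (0 : ℝ) < (N : ℝ) + k := by
      have : (1 : ℝ) ≤ (k : ℝ) := by exact_mod_cast hk1
      have : (0 : ℝ) ≤ (N : ℝ) := Nat.cast_nonneg _
      positivity
    have hden : (0 : ℝ) < (N : ℝ) + k + 1 := by positivity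
    have hδn : (N : ℝ) ^ 2 / ((N : ℝ) + k) < δ := by
      rw [div_lt_iff₀ hnR]
      have hkk : ((N : ℝ) ^ 2 / δ) < k := by
        calc ((N : ℝ) ^ 2 / δ) < k₀ := hk₀
          _ ≤ k := by exact_mod_cast le_trans (Nat.le_succ k₀) hk
      rw [div_lt_iff₀ hδ] at hkk
      have : (k : ℝ) ≤ (N : ℝ) + k := by
        have : (0 : ℝ) ≤ (N : ℝ) := Nat.cast_nonneg _
        linarith
      nlinarith
    rw [dist_eq_norm, sub_zero, hA_def, hB_def]
    simp only
    rw [← mul_sub, ← Finset.sum_sub_distrib]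
    have hterm : ∀ j ∈ Finset.range (k + 1),
        ‖f (((k.factorial : ℝ) * ((N + k - j).factorial : ℝ)) /
            (((N + k).factorial : ℝ) * ((k - j).factorial : ℝ))) -
          h (((k - j : ℕ) : ℝ) / ((N : ℝ) + k))‖ ≤ ε / 2 := by
      intro j hj
      rw [Finset.mem_range] at hj
      have hjk : j ≤ k := Nat.lt_succ_iff.mp hj
      obtain ⟨hlo, hhi⟩ := aux_lam_mem N k j hjk hkpos
      set m : ℝ := ((k - j : ℕ) : ℝ) with hm
      have hm0 : 0 ≤ m := Nat.cast_nonneg _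
      have hmk : m ≤ (k : ℝ) := by rw [hm]; exact_mod_cast Nat.sub_le k j
      have hb0 : (0 : ℝ) ≤ m / ((N : ℝ) + k) := by positivity
      have hba : m / ((N : ℝ) + k) ≤ (m + N) / ((N : ℝ) + k) := by
        apply div_le_div_of_nonneg_right _ hnR.le
        have : (0 : ℝ) ≤ (N : ℝ) := Nat.cast_nonneg _
        linarith
      have ha1 : (m + N) / ((N : ℝ) + k) ≤ 1 := by
        rw [div_le_one hnR]
        linarith
      set lam : ℝ := ((k.factorial : ℝ) * ((N + k - j).factorial : ℝ)) /
          (((N + k).factorial : ℝ) * ((k - j).factorial : ℝ)) with hlam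
      have hlam_mem : lam ∈ Set.Icc (0 : ℝ) 1 := by
        constructor
        · exact le_trans (pow_nonneg hb0 N) hlo
        · exact le_trans hhi (pow_le_one₀ (by positivity) ha1)
      have hy_mem : (m / ((N : ℝ) + k)) ^ N ∈ Set.Icc (0 : ℝ) 1 := by
        constructor
        · positivity
        · exact pow_le_one₀ hb0 (by rw [div_le_one hnR]; linarith)
      have hdist : dist lam ((m / ((N : ℝ) + k)) ^ N) < δ := by
        rw [Real.dist_eq, abs_of_nonneg (by linarith [hlo])]
        have hsub : lam - (m / ((N : ℝ) + k)) ^ N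
            ≤ ((m + N) / ((N : ℝ) + k)) ^ N - (m / ((N : ℝ) + k)) ^ N := by linarith
        have hpp := aux_pow_sub_pow_le N hb0 hba ha1
        have hd : (m + N) / ((N : ℝ) + k) - m / ((N : ℝ) + k) = (N : ℝ) / ((N : ℝ) + k) := by
          field_simp
          ring
        rw [hd] at hpp
        calc lam - (m / ((N : ℝ) + k)) ^ N
            ≤ (N : ℝ) * ((N : ℝ) / ((N : ℝ) + k)) := by linarith
          _ = (N : ℝ) ^ 2 / ((N : ℝ) + k) := by ring
          _ < δ := hδn
      have := H lam hlam_mem _ hy_mem hdist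
      rw [Real.dist_eq] at this
      have harg : h (m / ((N : ℝ) + k)) = f ((m / ((N : ℝ) + k)) ^ N) := rfl
      rw [harg]
      exact le_of_lt this
    calc ‖(1 / ((N : ℝ) + k + 1)) * ∑ j ∈ Finset.range (k + 1),
          (f (((k.factorial : ℝ) * ((N + k - j).factorial : ℝ)) /
            (((N + k).factorial : ℝ) * ((k - j).factorial : ℝ))) -
            h (((k - j : ℕ) : ℝ) / ((N : ℝ) + k)))‖
        = (1 / ((N : ℝ) + k + 1)) * ‖∑ j ∈ Finset.range (k + 1),
          (f (((k.factorial : ℝ) * ((N + k - j).factorial : ℝ)) /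
            (((N + k).factorial : ℝ) * ((k - j).factorial : ℝ))) -
            h (((k - j : ℕ) : ℝ) / ((N : ℝ) + k)))‖ := by
          rw [norm_mul, Real.norm_eq_abs (1 / ((N : ℝ) + k + 1)), abs_of_pos (by positivity)]
      _ ≤ (1 / ((N : ℝ) + k + 1)) * (((k : ℝ) + 1) * (ε / 2)) := by
          apply mul_le_mul_of_nonneg_left _ (by positivity)
          calc ‖∑ j ∈ Finset.range (k + 1), _‖
              ≤ ∑ j ∈ Finset.range (k + 1),
                ‖f (((k.factorial : ℝ) * ((N + k - j).factorial : ℝ)) /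
                  (((N + k).factorial : ℝ) * ((k - j).factorial : ℝ))) -
                  h (((k - j : ℕ) : ℝ) / ((N : ℝ) + k))‖ := norm_sum_le _ _
            _ ≤ ∑ _j ∈ Finset.range (k + 1), ε / 2 := Finset.sum_le_sum hterm
            _ = ((k : ℝ) + 1) * (ε / 2) := by
                rw [Finset.sum_const, Finset.card_range]; push_cast; ring
      _ ≤ ε / 2 := by
          rw [mul_comm, mul_one_div, div_le_iff₀ hden]
          have hN0 : (0 : ℝ) ≤ (N : ℝ) := Nat.cast_nonneg _
          nlinarith
      _ < ε := by linarith
  -- step 2 : B - R ∘ (N + ·) → 0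
  obtain ⟨M, hM⟩ := isCompact_Icc.exists_bound_of_continuousOn hh
  have hM0 : 0 ≤ M := le_trans (norm_nonneg _) (hM 0 ⟨le_refl _, zero_le_one⟩)
  have h2 : Filter.Tendsto (fun k => B k - R (N + k)) Filter.atTop (nhds 0) := by
    apply squeeze_zero_norm' (a := fun k : ℕ => M * ((N : ℝ) + 1) / ((N : ℝ) + k))
    · filter_upwards [eventually_ge_atTop 1] with k hk
      have hk1 : (1 : ℝ) ≤ (k : ℝ) := by exact_mod_cast hk
      have hNR : (0 : ℝ) ≤ (N : ℝ) := Nat.cast_nonneg _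
      have hN1' : (1 : ℝ) ≤ (N : ℝ) := by exact_mod_cast hN1
      have hnR : (0 : ℝ) < (N : ℝ) + k := by linarith
      have hnR1 : (0 : ℝ) < (N : ℝ) + k + 1 := by linarith
      have hcast : ((N + k : ℕ) : ℝ) = (N : ℝ) + k := by push_cast; ring
      have hmemI : ∀ i : ℕ, i ≤ N + k → ‖h ((i : ℝ) / ((N : ℝ) + k))‖ ≤ M := by
        intro i hi
        apply hM
        constructor
        · positivity
        · rw [div_le_one hnR]
          rw [← hcast]
          exact_mod_cast hi
      have hBr : B k = (1 / ((N : ℝ) + k + 1)) *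
          ∑ i ∈ Finset.range (k + 1), h ((i : ℝ) / ((N : ℝ) + k)) := by
        rw [hB_def]
        simp only
        congr 1
        have := Finset.sum_range_reflect (fun i : ℕ => h ((i : ℝ) / ((N : ℝ) + k))) (k + 1)
        simp only [Nat.add_sub_cancel] at this
        exact this
      have hRr : R (N + k) = (1 / ((N : ℝ) + k)) *
          ∑ i ∈ Finset.range (N + k), h ((i : ℝ) / ((N : ℝ) + k)) := by
        rw [hR_def]
        simp only [hcast]
      have hsum : ∑ i ∈ Finset.range (N + k), h ((i : ℝ) / ((N : ℝ) + k))
          = (∑ i ∈ Finset.range (k + 1), h ((i : ℝ) / ((N : ℝ) + k)))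
            + ∑ i ∈ Finset.Ico (k + 1) (N + k), h ((i : ℝ) / ((N : ℝ) + k)) :=
        (Finset.sum_range_add_sum_Ico _ (by omega)).symm
      set S : ℝ := ∑ i ∈ Finset.range (k + 1), h ((i : ℝ) / ((N : ℝ) + k)) with hS_def
      set E : ℝ := ∑ i ∈ Finset.Ico (k + 1) (N + k), h ((i : ℝ) / ((N : ℝ) + k)) with hE_def
      have hSb : ‖S‖ ≤ ((k : ℝ) + 1) * M := by
        calc ‖S‖ ≤ ∑ i ∈ Finset.range (k + 1), ‖h ((i : ℝ) / ((N : ℝ) + k))‖ := norm_sum_le _ _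
          _ ≤ ∑ _i ∈ Finset.range (k + 1), M := by
              apply Finset.sum_le_sum
              intro i hi
              rw [Finset.mem_range] at hi
              exact hmemI i (by omega)
          _ = ((k : ℝ) + 1) * M := by
              rw [Finset.sum_const, Finset.card_range]; push_cast; ring
      have hEb : ‖E‖ ≤ ((N : ℝ) - 1) * M := by
        calc ‖E‖ ≤ ∑ i ∈ Finset.Ico (k + 1) (N + k), ‖h ((i : ℝ) / ((N : ℝ) + k))‖ :=
              norm_sum_le _ _
          _ ≤ ∑ _i ∈ Finset.Ico (k + 1) (N + k), M := by
              apply Finset.sum_le_sum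
              intro i hi
              rw [Finset.mem_Ico] at hi
              exact hmemI i (le_of_lt hi.2)
          _ = ((N : ℝ) - 1) * M := by
              rw [Finset.sum_const, Nat.card_Ico]
              have hcard : N + k - (k + 1) = N - 1 := by omega
              rw [hcard, nsmul_eq_mul]
              have hc2 : ((N - 1 : ℕ) : ℝ) = (N : ℝ) - 1 := by
                have := Nat.cast_sub (R := ℝ) hN1
                simpa using this
              rw [hc2]
      have hkey : B k - R (N + k)
          = (1 / ((N : ℝ) + k + 1) - 1 / ((N : ℝ) + k)) * S - (1 / ((N : ℝ) + k)) * E := by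
        rw [hBr, hRr, hsum]
        ring
      have habs : |1 / ((N : ℝ) + k + 1) - 1 / ((N : ℝ) + k)|
          = 1 / (((N : ℝ) + k) * ((N : ℝ) + k + 1)) := by
        rw [abs_of_nonpos]
        · field_simp
          ring
        · rw [sub_nonpos]
          apply one_div_le_one_div_of_le hnR
          linarith
      rw [hkey]
      calc ‖(1 / ((N : ℝ) + k + 1) - 1 / ((N : ℝ) + k)) * S - (1 / ((N : ℝ) + k)) * E‖
          ≤ ‖(1 / ((N : ℝ) + k + 1) - 1 / ((N : ℝ) + k)) * S‖ + ‖(1 / ((N : ℝ) + k)) * E‖ :=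
            norm_sub_le _ _
        _ = (1 / (((N : ℝ) + k) * ((N : ℝ) + k + 1))) * ‖S‖ + (1 / ((N : ℝ) + k)) * ‖E‖ := by
            rw [norm_mul, norm_mul, Real.norm_eq_abs (1 / ((N : ℝ) + k + 1) - 1 / ((N : ℝ) + k)),
              habs, Real.norm_eq_abs (1 / ((N : ℝ) + k)), abs_of_pos (by positivity)]
        _ ≤ (1 / (((N : ℝ) + k) * ((N : ℝ) + k + 1))) * (((k : ℝ) + 1) * M)
            + (1 / ((N : ℝ) + k)) * (((N : ℝ) - 1) * M) := by
            apply add_le_add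
            · exact mul_le_mul_of_nonneg_left hSb (by positivity)
            · exact mul_le_mul_of_nonneg_left hEb (by positivity)
        _ ≤ M * ((N : ℝ) + 1) / ((N : ℝ) + k) := by
            have e1 : (1 / (((N : ℝ) + k) * ((N : ℝ) + k + 1))) * (((k : ℝ) + 1) * M)
                = (((k : ℝ) + 1) / ((N : ℝ) + k + 1)) * (M / ((N : ℝ) + k)) := by
              rw [one_div, mul_inv]
              ring
            have e2 : ((k : ℝ) + 1) / ((N : ℝ) + k + 1) ≤ 1 := by
              rw [div_le_one hnR1]; linarith
            have e3 : (((k : ℝ) + 1) / ((N : ℝ) + k + 1)) * (M / ((N : ℝ) + k))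
                ≤ 1 * (M / ((N : ℝ) + k)) :=
              mul_le_mul_of_nonneg_right e2 (by positivity)
            have e4 : (1 / ((N : ℝ) + k)) * (((N : ℝ) - 1) * M) = ((N : ℝ) - 1) * M / ((N : ℝ) + k) := by
              ring
            have e5 : M / ((N : ℝ) + k) + ((N : ℝ) - 1) * M / ((N : ℝ) + k)
                ≤ M * ((N : ℝ) + 1) / ((N : ℝ) + k) := by
              rw [← add_div, div_le_div_iff₀ hnR hnR]
              nlinarith
            linarith [e1 ▸ e3, e4, e5]
    · apply Filter.Tendsto.div_atTop tendsto_const_nhds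
      exact Filter.tendsto_atTop_add_const_left _ _ tendsto_natCast_atTop_atTop
  -- assembly
  have hA : Filter.Tendsto A Filter.atTop (nhds (∫ t in (0:ℝ)..1, h t)) := by
    have hcomb := (h1.add h2).add hRlim
    rw [zero_add, zero_add] at hcomb
    have heq : (fun k : ℕ => A k - B k + (B k - R (N + k)) + R (N + k)) = A := by
      funext k; ring
    rwa [heq] at hcomb
  have hfinal := hA.const_mul ((N : ℝ) + 1)
  apply Filter.Tendsto.congr _ hfinal
  intro k
  ring
end
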